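/- arXiv:1504.02673 — 6 statements merged into one kernel-verified Lean document; each statement's English description precedes it below -/
import Mathlib

section
/- For every integer x ≥ 0, the quantity Ω(x) := (1/(2π))·( ∫_{-π}^{π} ( cos(xξ)/(2(1-cos ξ)) - 1/ξ² ) dξ - 2/π ) + x/2 equals 0. -/
/-!
Since `1 - cos (n ξ) = 2 (1 - cos ξ) P_n(ξ)` for the trigonometric polynomial `P_n` below (half
of `n` times the Fejér kernel), the integrand equals `G(ξ) - P_n(ξ)` away from `ξ = 0`, where
`G(ξ) = 1/(2(1 - cos ξ)) - 1/ξ²` no longer depends on `n`. The constant term of `P_n` is `n/2`,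
so `∫ P_n = π n`, which cancels the term `x/2`. Finally `G` is even, nonnegative and has the
primitive `1/ξ - cot(ξ/2)/2` on `(0, π)`, which tends to `0` at `0` and equals `1/π` at `π`;
hence `∫ G = 2/π`.
-/

open Real intervalIntegral MeasureTheory Set Filter Topology

/-- `n / 2` times the Fejér kernel `∑_{|k| < n} (1 - |k| / n) e^{i k ξ}`. -/
noncomputable def fejerPoly (n : ℕ) (ξ : ℝ) : ℝ :=
  (∑ k ∈ Finset.range n, ((n : ℝ) - k) * cos (k * ξ)) - n / 2

theorem two_mul_one_sub_cos_mul_dirichlet (n : ℕ) (ξ : ℝ) :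
    2 * (1 - cos ξ) * ((∑ k ∈ Finset.range (n + 1), cos (k * ξ)) - 1 / 2) =
      cos (n * ξ) - cos ((n + 1) * ξ) := by
  induction n with
  | zero => simp; ring
  | succ n ih =>
    rw [Finset.sum_range_succ]
    push_cast at ih ⊢
    have h_next :
        cos ((n + 1 + 1) * ξ) = cos ((n + 1) * ξ) * cos ξ - sin ((n + 1) * ξ) * sin ξ := by
      rw [← cos_add]; ring_nf
    have h_prev : cos (n * ξ) = cos ((n + 1) * ξ) * cos ξ + sin ((n + 1) * ξ) * sin ξ := by
      rw [← cos_sub]; ring_nf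
    linear_combination ih + h_next + h_prev

theorem one_sub_cos_nat_mul_eq (n : ℕ) (ξ : ℝ) :
    1 - cos (n * ξ) = 2 * (1 - cos ξ) * fejerPoly n ξ := by
  induction n with
  | zero => simp [fejerPoly]
  | succ n ih =>
    have h_split : fejerPoly (n + 1) ξ =
        fejerPoly n ξ + ((∑ k ∈ Finset.range (n + 1), cos (k * ξ)) - 1 / 2) := by
      simp only [fejerPoly, Nat.cast_add, Nat.cast_one, add_sub_right_comm _ (1 : ℝ), add_mul,
        one_mul, Finset.sum_add_distrib,
        Finset.sum_range_succ (fun k : ℕ => ((n : ℝ) - k) * cos (k * ξ)), sub_self, zero_mul,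
        add_zero]
      ring
    rw [h_split, Nat.cast_succ]
    linear_combination ih - two_mul_one_sub_cos_mul_dirichlet n ξ

theorem continuous_fejerPoly (n : ℕ) : Continuous (fejerPoly n) := by
  unfold fejerPoly; fun_prop

theorem integral_cos_nat_mul_neg_pi_pi (k : ℕ) :
    ∫ ξ in (-π)..π, cos (k * ξ) = if k = 0 then 2 * π else 0 := by
  rcases eq_or_ne k 0 with rfl | hk
  · simp [two_mul]
  · rw [if_neg hk, integral_comp_mul_left (fun x => cos x) (Nat.cast_ne_zero.mpr hk)]
    simp [sin_nat_mul_pi]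

theorem integral_fejerPoly (n : ℕ) : ∫ ξ in (-π)..π, fejerPoly n ξ = π * n := by
  have h_int (k : ℕ) : IntervalIntegrable (fun ξ => ((n : ℝ) - k) * cos (k * ξ)) volume (-π) π :=
    (by fun_prop : Continuous _).intervalIntegrable _ _
  unfold fejerPoly
  rw [integral_sub ((by fun_prop : Continuous _).intervalIntegrable _ _) intervalIntegrable_const,
    integral_finsetSum fun k _ => h_int k]
  simp only [intervalIntegral.integral_const_mul, integral_cos_nat_mul_neg_pi_pi, mul_ite, mul_zero,
    Finset.sum_ite_eq', Finset.mem_range, intervalIntegral.integral_const, smul_eq_mul]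
  rcases Nat.eq_zero_or_pos n with rfl | hn
  · simp
  · rw [if_pos hn]; push_cast; ring

noncomputable def kernelRemainder (ξ : ℝ) : ℝ :=
  1 / (2 * (1 - cos ξ)) - 1 / ξ ^ 2

/-- `1/ξ - cot(ξ/2)/2`; at `ξ = 0` Lean's `0⁻¹ = 0` makes it `0`, which is also its limit there. -/
noncomputable def kernelRemainderPrimitive (ξ : ℝ) : ℝ :=
  ξ⁻¹ - cos (ξ / 2) / (2 * sin (ξ / 2))

theorem two_mul_one_sub_cos (ξ : ℝ) : 2 * (1 - cos ξ) = 4 * sin (ξ / 2) ^ 2 := by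
  rw [sin_sq_eq_half_sub, mul_div_cancel₀ ξ two_ne_zero]; ring

theorem hasDerivAt_kernelRemainderPrimitive {ξ : ℝ} (hξ : ξ ≠ 0) (hs : sin (ξ / 2) ≠ 0) :
    HasDerivAt kernelRemainderPrimitive (kernelRemainder ξ) ξ := by
  have h_half : HasDerivAt (fun ξ : ℝ => ξ / 2) (1 / 2) ξ := by
    simpa using (hasDerivAt_id ξ).div_const 2
  have h_cot := h_half.cos.div (h_half.sin.const_mul 2) (mul_ne_zero two_ne_zero hs)
  refine (((hasDerivAt_id ξ).inv hξ).sub h_cot).congr_deriv ?_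
  rw [kernelRemainder, two_mul_one_sub_cos, id]
  field_simp
  linear_combination (4 * ξ ^ 2) * sin_sq_add_cos_sq (ξ / 2)

theorem kernelRemainder_nonneg {ξ : ℝ} (h : cos ξ ≠ 1) : 0 ≤ kernelRemainder ξ := by
  have h_pos : 0 < 2 * (1 - cos ξ) := by linarith [lt_of_le_of_ne (cos_le_one ξ) h]
  have h_le : 2 * (1 - cos ξ) ≤ ξ ^ 2 := by linarith [one_sub_sq_div_two_le_cos (x := ξ)]
  rw [kernelRemainder, sub_nonneg]
  exact one_div_le_one_div_of_le h_pos h_le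

theorem kernelRemainder_neg (ξ : ℝ) : kernelRemainder (-ξ) = kernelRemainder ξ := by
  simp [kernelRemainder]

theorem kernelRemainderPrimitive_two_mul {t : ℝ} (ht : t ≠ 0) (hs : sin t ≠ 0) :
    kernelRemainderPrimitive (2 * t) = (sin t - t * cos t) / (2 * t * sin t) := by
  rw [kernelRemainderPrimitive, mul_div_cancel_left₀ t two_ne_zero]
  field_simp

theorem mul_cos_le_sin {t : ℝ} (ht : 0 ≤ t) (ht' : t ≤ π / 2) : t * cos t ≤ sin t := by
  rcases ht.eq_or_lt with rfl | ht
  · simp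
  rcases ht'.lt_or_eq with ht' | rfl
  · have hc : 0 < cos t := cos_pos_of_mem_Ioo ⟨by linarith [pi_pos], ht'⟩
    have := lt_tan ht ht'
    rw [tan_eq_sin_div_cos, lt_div_iff₀ hc] at this
    exact this.le
  · simp

theorem kernelRemainderPrimitive_mem_Icc {ξ : ℝ} (h₀ : 0 ≤ ξ) (hπ : ξ ≤ π) :
    kernelRemainderPrimitive ξ ∈ Icc 0 (π * ξ / 16) := by
  rcases h₀.eq_or_lt with rfl | h₀
  · simp [kernelRemainderPrimitive]
  obtain ⟨t, rfl⟩ : ∃ t, ξ = 2 * t := ⟨ξ / 2, by ring⟩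
  have ht : 0 < t := by linarith
  have hs : 0 < sin t := sin_pos_of_pos_of_lt_pi ht (by linarith [pi_pos])
  have h_sin_ge : 2 / π * t ≤ sin t := mul_le_sin ht.le (by linarith)
  have h_num_nonneg : 0 ≤ sin t - t * cos t := sub_nonneg.mpr (mul_cos_le_sin ht.le (by linarith))
  -- `sin t - t cos t ≤ t (1 - cos t) ≤ t³/2` and `2 t sin t ≥ 4 t²/π`
  have h_num_le : sin t - t * cos t ≤ t ^ 3 / 2 := by
    nlinarith [sin_le ht.le, one_sub_sq_div_two_le_cos (x := t)]
  rw [kernelRemainderPrimitive_two_mul ht.ne' hs.ne']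
  refine ⟨by positivity, ?_⟩
  rw [div_le_iff₀ (by positivity)]
  calc sin t - t * cos t ≤ t ^ 3 / 2 := h_num_le
    _ = π * (2 * t) / 16 * (2 * t * (2 / π * t)) := by field_simp; ring
    _ ≤ π * (2 * t) / 16 * (2 * t * sin t) := by gcongr

theorem continuousOn_kernelRemainderPrimitive :
    ContinuousOn kernelRemainderPrimitive (Icc 0 π) := by
  intro x hx
  rcases hx.1.eq_or_lt with rfl | hx₀
  · have h_bound (ξ) (hξ : ξ ∈ Icc 0 π) := kernelRemainderPrimitive_mem_Icc hξ.1 hξ.2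
    have h_lim : Tendsto kernelRemainderPrimitive (𝓝[Icc 0 π] 0) (𝓝 0) :=
      squeeze_zero' (eventually_nhdsWithin_of_forall fun ξ hξ => (h_bound ξ hξ).1)
        (eventually_nhdsWithin_of_forall fun ξ hξ => (h_bound ξ hξ).2)
        (tendsto_nhdsWithin_of_tendsto_nhds
          ((by fun_prop : Continuous fun ξ : ℝ => π * ξ / 16).tendsto' 0 0 (by simp)))
    simpa [ContinuousWithinAt, kernelRemainderPrimitive] using h_lim
  · have hs : sin (x / 2) ≠ 0 :=
      (sin_pos_of_pos_of_lt_pi (by linarith) (by linarith [hx.2, pi_pos])).ne'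
    exact (hasDerivAt_kernelRemainderPrimitive hx₀.ne' hs).continuousAt.continuousWithinAt

theorem hasDerivAt_kernelRemainderPrimitive_of_mem_Ioo {ξ : ℝ} (hξ : ξ ∈ Ioo 0 π) :
    HasDerivAt kernelRemainderPrimitive (kernelRemainder ξ) ξ :=
  hasDerivAt_kernelRemainderPrimitive hξ.1.ne'
    (sin_pos_of_pos_of_lt_pi (by linarith [hξ.1]) (by linarith [hξ.2, pi_pos])).ne'

theorem intervalIntegrable_kernelRemainder_zero_pi :
    IntervalIntegrable kernelRemainder volume 0 π := by
  have hπ : Ioo (min 0 π) (max 0 π) = Ioo 0 π := by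
    rw [min_eq_left pi_pos.le, max_eq_right pi_pos.le]
  refine intervalIntegrable_deriv_of_nonneg (g := kernelRemainderPrimitive) ?_ ?_ ?_
  · rw [uIcc_of_le pi_pos.le]; exact continuousOn_kernelRemainderPrimitive
  · rw [hπ]; exact fun ξ hξ => hasDerivAt_kernelRemainderPrimitive_of_mem_Ioo hξ
  · rw [hπ]
    refine fun ξ hξ => kernelRemainder_nonneg ((cos_eq_one_iff_of_lt_of_lt ?_ ?_).not.mpr hξ.1.ne')
    · linarith [hξ.1, pi_pos]
    · linarith [hξ.2, pi_pos]

theorem integral_kernelRemainder_zero_pi : ∫ ξ in (0 : ℝ)..π, kernelRemainder ξ = 1 / π := by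
  rw [integral_eq_sub_of_hasDerivAt_of_le pi_pos.le continuousOn_kernelRemainderPrimitive
    (fun ξ hξ => hasDerivAt_kernelRemainderPrimitive_of_mem_Ioo hξ)
    intervalIntegrable_kernelRemainder_zero_pi]
  simp [kernelRemainderPrimitive]

theorem intervalIntegrable_kernelRemainder_neg_pi_zero :
    IntervalIntegrable kernelRemainder volume (-π) 0 := by
  simpa [kernelRemainder_neg] using
    (IntervalIntegrable.iff_comp_neg).mp intervalIntegrable_kernelRemainder_zero_pi.symm

theorem integral_kernelRemainder : ∫ ξ in (-π)..π, kernelRemainder ξ = 2 / π := by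
  have h_left : ∫ ξ in (-π)..0, kernelRemainder ξ = ∫ ξ in (0 : ℝ)..π, kernelRemainder ξ := by
    simpa [kernelRemainder_neg] using (integral_comp_neg (a := 0) (b := π) kernelRemainder).symm
  rw [← integral_add_adjacent_intervals intervalIntegrable_kernelRemainder_neg_pi_zero
    intervalIntegrable_kernelRemainder_zero_pi, h_left, integral_kernelRemainder_zero_pi]
  ring

theorem cos_nat_mul_div_sub_inv_sq {ξ : ℝ} (n : ℕ) (h : cos ξ ≠ 1) :
    cos (n * ξ) / (2 * (1 - cos ξ)) - 1 / ξ ^ 2 = kernelRemainder ξ - fejerPoly n ξ := by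
  have h_ne : 2 * (1 - cos ξ) ≠ 0 := fun h' => h (by linarith)
  have h_fejer : fejerPoly n ξ = (1 - cos (n * ξ)) / (2 * (1 - cos ξ)) := by
    rw [one_sub_cos_nat_mul_eq, mul_div_cancel_left₀ _ h_ne]
  rw [kernelRemainder, h_fejer]
  ring

theorem integral_cos_nat_mul_div_sub_inv_sq (n : ℕ) :
    ∫ ξ in (-π)..π, (cos (n * ξ) / (2 * (1 - cos ξ)) - 1 / ξ ^ 2) = 2 / π - π * n := by
  have h_ae : ∀ᵐ ξ, ξ ∈ uIoc (-π) π →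
      cos (n * ξ) / (2 * (1 - cos ξ)) - 1 / ξ ^ 2 = kernelRemainder ξ - fejerPoly n ξ := by
    filter_upwards [volume.ae_ne 0] with ξ hξ₀ hξ
    rw [uIoc_of_le (by linarith [pi_pos])] at hξ
    refine cos_nat_mul_div_sub_inv_sq n ((cos_eq_one_iff_of_lt_of_lt ?_ ?_).not.mpr hξ₀)
    · linarith [hξ.1, pi_pos]
    · linarith [hξ.2, pi_pos]
  have h_int : IntervalIntegrable kernelRemainder volume (-π) π :=
    intervalIntegrable_kernelRemainder_neg_pi_zero.trans intervalIntegrable_kernelRemainder_zero_pi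
  rw [integral_congr_ae h_ae, integral_sub h_int ((continuous_fejerPoly n).intervalIntegrable _ _),
    integral_kernelRemainder, integral_fejerPoly]

theorem omega_eq_zero (x : ℤ) (hx : 0 ≤ x) :
    (1 / (2 * π)) *
        ((∫ ξ in (-π)..π, (Real.cos (x * ξ) / (2 * (1 - Real.cos ξ)) - 1 / ξ ^ 2)) - 2 / π)
      + (x : ℝ) / 2 = 0 := by
  lift x to ℕ using hx
  push_cast
  rw [integral_cos_nat_mul_div_sub_inv_sq]
  field_simp
  ring
end

section
/- Let N ∈ ℕ and let a_1,…,a_N be real numbers with Σ_{ν=1}^N a_ν ν² = 1 and Σ_{ν=1}^N a_ν ν^{2m} = 0 for m = 2,…,N. Define A(θ) := 2 Σ_{ν=1}^N a_ν (1 - cos(νθ)). Then A'(θ) > 0 for all θ ∈ (0,π). -/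
open Real Finset Filter Topology Asymptotics Polynomial
open scoped Nat

/-!
Write `A' = 2 S` with `S θ = ∑ a_ν ν sin (ν θ)`. The moment conditions say exactly that the Taylor
expansion of `S' θ = ∑ a_ν ν² cos (ν θ)` at `0` is `1 + O(θ^(2N))`. Through Chebyshev polynomials,
`S'` is a polynomial of degree `≤ N` in `1 - cos θ ≍ θ²`, so `S' θ = 1 + c (1 - cos θ)^N`.
Since `S 0 = S π = 0`, `S` is not increasing on `[0, π]`, so `c < 0`; then `S'` is strictly
decreasing on `[0, π]`, `S` is strictly concave there and hence positive on `(0, π)`.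
-/

theorem Polynomial.coeff_eq_zero_of_isBigO_pow {α 𝕜 : Type*} [NormedField 𝕜] {l : Filter α}
    [l.NeBot] {f : α → 𝕜} (hf : Tendsto f l (𝓝[≠] 0)) :
    ∀ {n : ℕ} {p : 𝕜[X]}, (fun x => p.eval (f x)) =O[l] (fun x => f x ^ n) →
      ∀ j < n, p.coeff j = 0
  | 0, _, _, j, hj => absurd hj j.not_lt_zero
  | n + 1, p, h, j, hj => by
    obtain ⟨hf0, hfne⟩ := tendsto_nhdsWithin_iff.mp hf
    have hcoeff0 : p.coeff 0 = 0 := by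
      have hlim : Tendsto (fun x => p.eval (f x)) l (𝓝 (p.coeff 0)) := by
        rw [coeff_zero_eq_eval_zero]; exact (p.continuous.tendsto 0).comp hf0
      exact tendsto_nhds_unique hlim (h.trans_tendsto (by simpa using hf0.pow (n + 1)))
    have hdivX : (fun x => p.divX.eval (f x)) =O[l] (fun x => f x ^ n) := by
      refine (h.mul (isBigO_refl (fun x => (f x)⁻¹) l)).congr' ?_ ?_ <;>
        filter_upwards [hfne] with x (hx : f x ≠ 0)
      · conv_lhs => rw [← X_mul_divX_add p, hcoeff0]
        rw [eval_add, eval_mul, eval_X, eval_C, add_zero, mul_comm, inv_mul_cancel_left₀ hx]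
      · rw [pow_succ, mul_inv_cancel_right₀ hx]
    cases j with
    | zero => exact hcoeff0
    | succ j => rw [← coeff_divX]; exact coeff_eq_zero_of_isBigO_pow hf hdivX j (by omega)

theorem Polynomial.eval_eq_coeff_mul_pow_of_isBigO {α 𝕜 : Type*} [NormedField 𝕜] {l : Filter α}
    [l.NeBot] {f : α → 𝕜} (hf : Tendsto f l (𝓝[≠] 0)) {n : ℕ} {p : 𝕜[X]} (hp : p.natDegree ≤ n)
    (h : (fun x => p.eval (f x)) =O[l] (fun x => f x ^ n)) (y : 𝕜) :
    p.eval y = p.coeff n * y ^ n := by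
  rw [eval_eq_sum_range' (Nat.lt_succ_of_le hp), sum_range_succ,
    sum_eq_zero fun j hj => by rw [coeff_eq_zero_of_isBigO_pow hf h j (mem_range.mp hj), zero_mul],
    zero_add]

theorem sum_range_two_mul_pow_add_neg_pow {R : Type*} [CommRing R] (z : R) (c : ℕ → R) (n : ℕ) :
    ∑ m ∈ range (2 * n), (z ^ m + (-z) ^ m) * c m = 2 * ∑ k ∈ range n, z ^ (2 * k) * c (2 * k) := by
  induction n with
  | zero => simp
  | succ n ih =>
    rw [show 2 * (n + 1) = 2 * n + 1 + 1 by ring, sum_range_succ, sum_range_succ, ih,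
      sum_range_succ, (Odd.neg_pow ⟨n, rfl⟩ z), Even.neg_pow ⟨n, two_mul n⟩]
    ring

theorem Complex.cos_sub_sum_range_isBigO_pow (n : ℕ) :
    (fun z => Complex.cos z - ∑ k ∈ range n, (-1) ^ k * z ^ (2 * k) / (2 * k)!) =O[𝓝 0]
      (· ^ (2 * n)) := by
  have hexp (u : ℂ) : (fun z => Complex.exp (u * z) - ∑ m ∈ range (2 * n), (u * z) ^ m / m !)
      =O[𝓝 0] (fun z => (u * z) ^ (2 * n)) :=
    (Complex.exp_sub_sum_range_isBigO_pow (2 * n)).comp_tendsto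
      (by simpa using (continuous_const_mul u).tendsto 0)
  have hscale (u : ℂ) : (fun z : ℂ => (u * z) ^ (2 * n)) =O[𝓝 0] (· ^ (2 * n)) := by
    simpa only [mul_pow] using (isBigO_refl (· ^ (2 * n)) _).const_mul_left (u ^ (2 * n))
  refine ((((hexp I).trans (hscale I)).add ((hexp (-I)).trans (hscale (-I)))).const_mul_left
    (1 / 2)).congr_left fun z => ?_
  have hcos : 2 * Complex.cos z = Complex.exp (I * z) + Complex.exp (-I * z) := by
    rw [Complex.two_cos, neg_mul, mul_comm z I, neg_mul]
  have hpair : ∑ m ∈ range (2 * n), (I * z) ^ m / m ! + ∑ m ∈ range (2 * n), (-I * z) ^ m / m !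
      = 2 * ∑ k ∈ range n, (-1) ^ k * z ^ (2 * k) / (2 * k)! := by
    rw [← sum_add_distrib]
    convert sum_range_two_mul_pow_add_neg_pow (I * z) (fun m => 1 / (m ! : ℂ)) n using 1
    · exact sum_congr rfl fun m _ => by ring
    · congr 1
      exact sum_congr rfl fun k _ => by rw [mul_pow, pow_mul I, I_sq]; ring
  linear_combination (-1 / 2 : ℂ) * hcos - (1 / 2 : ℂ) * hpair

theorem Real.cos_sub_sum_range_isBigO_pow (n : ℕ) :
    (fun x : ℝ => cos x - ∑ k ∈ range n, (-1) ^ k * x ^ (2 * k) / (2 * k)!) =O[𝓝 0]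
      (· ^ (2 * n)) := by
  rw [← Complex.isBigO_ofReal_left, ← Complex.isBigO_ofReal_right]
  simpa using Complex.isBigO_comp_ofReal_nhds (x := 0)
    (by simpa using Complex.cos_sub_sum_range_isBigO_pow n)

theorem sum_mul_cos_sub_sum_range_isBigO_pow {ι : Type*} (s : Finset ι) (w ω : ι → ℝ) (n : ℕ) :
    (fun θ => ∑ i ∈ s, w i * cos (ω i * θ) -
      ∑ k ∈ range n, (-1) ^ k * θ ^ (2 * k) / (2 * k)! * ∑ i ∈ s, w i * ω i ^ (2 * k))
      =O[𝓝 0] (· ^ (2 * n)) := by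
  have hterm (i : ι) : (fun θ => w i * (cos (ω i * θ) -
      ∑ k ∈ range n, (-1) ^ k * (ω i * θ) ^ (2 * k) / (2 * k)!)) =O[𝓝 0] (· ^ (2 * n)) := by
    refine IsBigO.const_mul_left ?_ (w i)
    refine ((Real.cos_sub_sum_range_isBigO_pow n).comp_tendsto
      (by simpa using (continuous_const_mul (ω i)).tendsto 0)).trans ?_
    simpa only [Function.comp_def, mul_pow] using
      (isBigO_refl (· ^ (2 * n)) _).const_mul_left (ω i ^ (2 * n))
  refine (IsBigO.fun_sum (s := s) fun i _ => hterm i).congr_left fun θ => ?_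
  simp only [mul_sub, sum_sub_distrib, mul_sum]
  rw [sum_comm]
  congr 1
  exact sum_congr rfl fun i _ => sum_congr rfl fun k _ => by ring

theorem sq_le_mul_one_sub_cos {θ : ℝ} (hθ : |θ| ≤ π) : θ ^ 2 ≤ π ^ 2 / 2 * (1 - cos θ) := by
  have h := cos_le_one_sub_mul_cos_sq hθ
  calc θ ^ 2 = π ^ 2 / 2 * (2 / π ^ 2 * θ ^ 2) := by field_simp
    _ ≤ π ^ 2 / 2 * (1 - cos θ) := by gcongr; linarith

theorem pow_two_mul_isBigO_one_sub_cos_pow (n : ℕ) :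
    (fun θ : ℝ => θ ^ (2 * n)) =O[𝓝 0] (fun θ => (1 - cos θ) ^ n) := by
  simp only [pow_mul]
  refine IsBigO.pow (IsBigO.of_bound (π ^ 2 / 2) ?_) n
  filter_upwards [Metric.closedBall_mem_nhds (0 : ℝ) pi_pos] with θ hθ
  rw [Metric.mem_closedBall, dist_zero_right] at hθ
  simp only [norm_pow, Real.norm_eq_abs, sq_abs, abs_of_nonneg (sub_nonneg.2 (cos_le_one θ))]
  exact sq_le_mul_one_sub_cos hθ

theorem tendsto_one_sub_cos_nhdsNE_zero :
    Tendsto (fun θ => 1 - cos θ) (𝓝[≠] 0) (𝓝[≠] 0) := by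
  refine tendsto_nhdsWithin_iff.2 ⟨?_, ?_⟩
  · exact ((continuous_const.sub continuous_cos).tendsto' 0 0 (by simp)).mono_left
      nhdsWithin_le_nhds
  · filter_upwards [self_mem_nhdsWithin,
      nhdsWithin_le_nhds (Metric.closedBall_mem_nhds (0 : ℝ) pi_pos)] with θ (hθ : θ ≠ 0) hθπ
    rw [Metric.mem_closedBall, dist_zero_right] at hθπ
    have := (show 0 < θ ^ 2 by positivity).trans_le (sq_le_mul_one_sub_cos hθπ)
    exact (pos_of_mul_pos_right this (by positivity)).ne'

theorem exists_sum_mul_cos_eq_add_mul_one_sub_cos_pow {ι : Type*} (s : Finset ι) (w : ι → ℝ)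
    (m : ι → ℕ) {n : ℕ} (hm : ∀ i ∈ s, m i ≤ n) (b : ℝ)
    (h : (fun θ => ∑ i ∈ s, w i * cos (m i * θ) - b) =O[𝓝 0] (· ^ (2 * n))) :
    ∃ c, ∀ θ, ∑ i ∈ s, w i * cos (m i * θ) = b + c * (1 - cos θ) ^ n := by
  set q : ℝ[X] := ∑ i ∈ s, C (w i) * (Chebyshev.T ℝ (m i)).comp (1 - X) - C b
  have hq (θ : ℝ) : q.eval (1 - cos θ) = ∑ i ∈ s, w i * cos (m i * θ) - b := by
    simp [q, eval_finsetSum, Chebyshev.T_real_cos]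
  have hdeg : q.natDegree ≤ n := by
    have h1X : (1 - X : ℝ[X]).natDegree ≤ 1 := by compute_degree
    refine (natDegree_sub_le _ _).trans (max_le (natDegree_sum_le_of_forall_le _ _ fun i hi => ?_)
      (by simp))
    calc (C (w i) * (Chebyshev.T ℝ (m i)).comp (1 - X)).natDegree
        ≤ (Chebyshev.T ℝ (m i)).natDegree * (1 - X : ℝ[X]).natDegree :=
          (natDegree_C_mul_le _ _).trans natDegree_comp_le
      _ ≤ m i * 1 := by rw [Chebyshev.natDegree_T]; gcongr; simp
      _ ≤ n := by simpa using hm i hi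
  refine ⟨q.coeff n, fun θ => ?_⟩
  have := eval_eq_coeff_mul_pow_of_isBigO tendsto_one_sub_cos_nhdsNE_zero hdeg
    (((h.congr_left fun θ => (hq θ).symm).trans (pow_two_mul_isBigO_one_sub_cos_pow n)).mono
      nhdsWithin_le_nhds) (1 - cos θ)
  linarith [hq θ]

theorem pos_of_hasDerivAt_one_add_mul_one_sub_cos_pow {f : ℝ → ℝ} {c : ℝ} {n : ℕ} (hn : n ≠ 0)
    (hf : ∀ t, HasDerivAt f (1 + c * (1 - cos t) ^ n) t) (h0 : f 0 = 0) (hπ : f π = 0)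
    {θ : ℝ} (hθ : θ ∈ Set.Ioo 0 π) : 0 < f θ := by
  have hderiv : deriv f = fun t => 1 + c * (1 - cos t) ^ n := funext fun t => (hf t).deriv
  have hcont : Continuous f := continuous_iff_continuousAt.2 fun t => (hf t).continuousAt
  have hc : c < 0 := by
    by_contra! hc
    have hmono : StrictMono f := strictMono_of_deriv_pos fun t => by
      rw [hderiv]
      exact lt_add_of_pos_of_le one_pos (mul_nonneg hc (pow_nonneg (sub_nonneg.2 (cos_le_one t)) n))
    exact (hmono pi_pos).ne (h0.trans hπ.symm)
  have hanti : StrictAntiOn (deriv f) (interior (Set.Icc 0 π)) := by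
    rw [interior_Icc, hderiv]
    intro s hs t ht hst
    have := pow_lt_pow_left₀ (sub_lt_sub_left
      (strictAntiOn_cos (Set.Ioo_subset_Icc_self hs) (Set.Ioo_subset_Icc_self ht) hst) 1)
      (sub_nonneg.2 (cos_le_one s)) hn
    simp only
    nlinarith
  have := (hanti.strictConcaveOn_of_deriv (convex_Icc 0 π) hcont.continuousOn).lt_on_openSegment
    (Set.left_mem_Icc.2 pi_pos.le) (Set.right_mem_Icc.2 pi_pos.le) pi_pos.ne
    (by rwa [openSegment_eq_Ioo pi_pos])
  simpa [h0, hπ] using this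

theorem hasDerivAt_sum_mul_sin {ι : Type*} (s : Finset ι) (w ω : ι → ℝ) (t : ℝ) :
    HasDerivAt (fun t => ∑ i ∈ s, w i * sin (ω i * t)) (∑ i ∈ s, w i * ω i * cos (ω i * t)) t := by
  refine HasDerivAt.fun_sum fun i _ => ?_
  exact ((((hasDerivAt_id' t).const_mul (ω i)).sin).const_mul (w i)).congr_deriv (by ring)

theorem hasDerivAt_sum_mul_one_sub_cos {ι : Type*} (s : Finset ι) (w ω : ι → ℝ) (t : ℝ) :
    HasDerivAt (fun t => ∑ i ∈ s, w i * (1 - cos (ω i * t)))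
      (∑ i ∈ s, w i * ω i * sin (ω i * t)) t := by
  refine HasDerivAt.fun_sum fun i _ => ?_
  exact ((((hasDerivAt_id' t).const_mul (ω i)).cos.const_sub 1).const_mul (w i)).congr_deriv
    (by ring)

theorem exists_sum_mul_sq_mul_cos_eq_one_add_mul_one_sub_cos_pow (N : ℕ) (a : Fin N → ℝ)
    (h1 : ∑ ν : Fin N, a ν * ((ν : ℕ) + 1 : ℝ) ^ 2 = 1)
    (hm : ∀ m : ℕ, 2 ≤ m → m ≤ N → ∑ ν : Fin N, a ν * ((ν : ℕ) + 1 : ℝ) ^ (2 * m) = 0) :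
    ∃ c, ∀ θ, ∑ ν : Fin N, a ν * ((ν : ℕ) + 1 : ℝ) ^ 2 * cos (((ν : ℕ) + 1) * θ) =
      1 + c * (1 - cos θ) ^ N := by
  have hN : 0 < N := Nat.pos_of_ne_zero <| by rintro rfl; simp at h1
  set ω : Fin N → ℝ := fun ν => (ν : ℕ) + 1
  have hmoment (k : ℕ) (hk : k ∈ range N) :
      ∑ ν, a ν * ω ν ^ 2 * ω ν ^ (2 * k) = if k = 0 then 1 else 0 := by
    simp only [mul_assoc, ← pow_add, show 2 + 2 * k = 2 * (k + 1) by ring]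
    rcases k with _ | k
    · simpa using h1
    · rw [if_neg k.succ_ne_zero]
      exact hm (k + 2) (by omega) (by simp at hk; omega)
  have hTaylor : (fun θ => ∑ ν, a ν * ω ν ^ 2 * cos (ω ν * θ) - 1) =O[𝓝 0] (· ^ (2 * N)) := by
    refine (sum_mul_cos_sub_sum_range_isBigO_pow univ (fun ν => a ν * ω ν ^ 2) ω N).congr_left
      fun θ => ?_
    rw [sum_congr (s₁ := range N) rfl fun k hk => by rw [hmoment k hk]]
    simp [hN]
  simpa using exists_sum_mul_cos_eq_add_mul_one_sub_cos_pow univ _ (fun ν : Fin N => (ν : ℕ) + 1)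
    (fun ν _ => ν.isLt) 1 (by simpa [ω] using hTaylor)

theorem symbol_deriv_pos_general (N : ℕ) (a : Fin N → ℝ)
    (h1 : ∑ ν : Fin N, a ν * ((ν : ℕ) + 1 : ℝ) ^ 2 = 1)
    (hm : ∀ m : ℕ, 2 ≤ m → m ≤ N → ∑ ν : Fin N, a ν * ((ν : ℕ) + 1 : ℝ) ^ (2 * m) = 0)
    (A : ℝ → ℝ)
    (hA : ∀ θ : ℝ, A θ = 2 * ∑ ν : Fin N, a ν * (1 - Real.cos (((ν : ℕ) + 1) * θ)))
    (θ : ℝ) (hθ : θ ∈ Set.Ioo 0 π) :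
    0 < deriv A θ := by
  have hN : N ≠ 0 := by rintro rfl; simp at h1
  obtain ⟨c, hc⟩ := exists_sum_mul_sq_mul_cos_eq_one_add_mul_one_sub_cos_pow N a h1 hm
  set ω : Fin N → ℝ := fun ν => (ν : ℕ) + 1
  have hS (t : ℝ) : HasDerivAt (fun t => ∑ ν, a ν * ω ν * sin (ω ν * t))
      (1 + c * (1 - cos t) ^ N) t := by
    convert hasDerivAt_sum_mul_sin univ (fun ν => a ν * ω ν) ω t using 1
    simpa [ω, mul_assoc, sq] using (hc t).symm
  have hA' : HasDerivAt A (2 * ∑ ν, a ν * ω ν * sin (ω ν * θ)) θ := by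
    rw [funext hA]
    exact (hasDerivAt_sum_mul_one_sub_cos univ a ω θ).const_mul 2
  rw [hA'.deriv]
  refine mul_pos two_pos (pos_of_hasDerivAt_one_add_mul_one_sub_cos_pow hN hS (by simp) ?_ hθ)
  exact sum_eq_zero fun ν _ => by simpa [ω] using Or.inr (sin_nat_mul_pi ((ν : ℕ) + 1))

theorem symbol_deriv_pos (N : ℕ) (hN : 0 < N) (a : Fin N → ℝ)
    (h1 : ∑ ν : Fin N, a ν * ((ν : ℕ) + 1 : ℝ) ^ 2 = 1)
    (hm : ∀ m : ℕ, 2 ≤ m → m ≤ N → ∑ ν : Fin N, a ν * ((ν : ℕ) + 1 : ℝ) ^ (2 * m) = 0)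
    (A : ℝ → ℝ)
    (hA : ∀ θ : ℝ, A θ = 2 * ∑ ν : Fin N, a ν * (1 - Real.cos (((ν : ℕ) + 1) * θ)))
    (θ : ℝ) (hθ : θ ∈ Set.Ioo 0 π) :
    0 < deriv A θ :=
  symbol_deriv_pos_general N a h1 hm A hA θ hθ
end

section
/- Let N ∈ ℕ and a_1,…,a_N be real numbers with Σ_{ν=1}^N a_ν ν² = 1 and Σ_{ν=1}^N a_ν ν^{2m} = 0 for m = 2,…,N. Define A(θ) := 2 Σ_{ν=1}^N a_ν (1 - cos(νθ)). Then A(θ) > 0 for all θ ∈ (0,π]. -/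
/-!
With `s = 2 - 2 cos θ = 4 sin² (θ / 2)`, the Chebyshev recurrence makes `2 - 2 cos (n θ)` a
polynomial `U_n(s)` whose coefficient of `s^(k+1)` is
`2 (-1)^k n² ∏_{j=1}^{k} (n² - j²) / (2k+2)!`, a polynomial of degree `k + 1` in `n²` without
constant term. The moment conditions therefore kill everything in `∑ a_ν U_ν` except the part
linear in `ν²`, leaving `A(θ) = ∑_{k<N} 2 (k!)² / (2k+2)! · s^(k+1)`, which is positive for
`s > 0`.
-/

open Real Finset Polynomial
open scoped Nat

noncomputable def sqNodePoly (m : ℕ) : ℝ[X] := ∏ j ∈ range m, (X - C (((j : ℝ) + 1) ^ 2))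

theorem eval_sqNodePoly_succ (m : ℕ) (y : ℝ) :
    (sqNodePoly (m + 1)).eval y = (sqNodePoly m).eval y * (y - ((m : ℝ) + 1) ^ 2) := by
  simp [sqNodePoly, prod_range_succ]

theorem sqNodePoly_monic (m : ℕ) : (sqNodePoly m).Monic :=
  monic_prod_of_monic _ _ fun _ _ => monic_X_sub_C _

theorem natDegree_sqNodePoly (m : ℕ) : (sqNodePoly m).natDegree = m := by
  rw [sqNodePoly, natDegree_prod_of_monic _ _ fun _ _ => monic_X_sub_C _]
  simp only [natDegree_X_sub_C, sum_const, card_range, smul_eq_mul, mul_one]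

theorem eval_zero_sqNodePoly (m : ℕ) :
    (sqNodePoly m).eval 0 = (-1) ^ m * (m ! : ℝ) ^ 2 := by
  simp [sqNodePoly, eval_prod, ← prod_range_add_one_eq_factorial, prod_neg, prod_pow]

theorem eval_sqNodePoly_eq_zero {m n : ℕ} (h₀ : 0 < n) (h : n ≤ m) :
    (sqNodePoly m).eval ((n : ℝ) ^ 2) = 0 := by
  rw [sqNodePoly, eval_prod]
  exact prod_eq_zero (i := n - 1) (by simp; omega) (by simp [Nat.cast_sub (by omega : 1 ≤ n)])

/-- `x · Q_m(x²) = ∏_{|j| ≤ m} (x - j)`, so shifting `x` by one trades the factor `x - m` for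
`x + m + 1`. -/
theorem sqNodePoly_shift (m : ℕ) (x : ℝ) :
    (x - m) * ((x + 1) * (sqNodePoly m).eval ((x + 1) ^ 2))
      = (x + m + 1) * (x * (sqNodePoly m).eval (x ^ 2)) := by
  induction m with
  | zero => simp [sqNodePoly]; ring
  | succ m ih =>
    rw [eval_sqNodePoly_succ, eval_sqNodePoly_succ]
    push_cast
    linear_combination (x - m - 1) * (x + m + 2) * ih

theorem sqNodePoly_secondDiff (m : ℕ) (x : ℝ) :
    (x + 1) ^ 2 * (sqNodePoly (m + 1)).eval ((x + 1) ^ 2)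
        - 2 * (x ^ 2 * (sqNodePoly (m + 1)).eval (x ^ 2))
        + (x - 1) ^ 2 * (sqNodePoly (m + 1)).eval ((x - 1) ^ 2)
      = (2 * m + 4) * (2 * m + 3) * (x ^ 2 * (sqNodePoly m).eval (x ^ 2)) := by
  have h₁ := sqNodePoly_shift m x
  have h₂ := sqNodePoly_shift m (x - 1)
  rw [sub_add_cancel] at h₂
  simp only [eval_sqNodePoly_succ]
  linear_combination (x + 1) * (x + m + 2) * h₁ - (x - 1) * (x - m - 2) * h₂

noncomputable def sinSqPoly : ℕ → ℝ[X]
  | 0 => 0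
  | 1 => X
  | n + 2 => 2 * X + (2 - X) * sinSqPoly (n + 1) - sinSqPoly n

theorem eval_sinSqPoly (n : ℕ) (θ : ℝ) :
    (sinSqPoly n).eval (2 - 2 * cos θ) = 2 - 2 * cos (n * θ) := by
  induction n using Nat.twoStepInduction with
  | zero => simp [sinSqPoly]
  | one => simp [sinSqPoly]
  | more n ih₀ ih₁ =>
    have h : cos ((n + 2 : ℕ) * θ) = 2 * cos θ * cos ((n + 1 : ℕ) * θ) - cos (n * θ) := by
      have e₁ : ((n + 2 : ℕ) : ℝ) * θ = (n + 1 : ℕ) * θ + θ := by push_cast; ring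
      have e₂ : (n : ℝ) * θ = (n + 1 : ℕ) * θ - θ := by push_cast; ring
      rw [e₁, e₂, cos_add, cos_sub]
      ring
    simp only [sinSqPoly, eval_sub, eval_add, eval_mul, eval_ofNat, eval_X, ih₀, ih₁, h]
    ring

noncomputable def sinSqCoeff : ℕ → ℕ → ℝ
  | _, 0 => 0
  | n, k + 1 => 2 * (-1) ^ k * ((n : ℝ) ^ 2 * (sqNodePoly k).eval ((n : ℝ) ^ 2)) / (2 * k + 2)!

@[simp]
theorem sinSqCoeff_zero (n : ℕ) : sinSqCoeff n 0 = 0 := rfl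

theorem sinSqCoeff_eq_zero_of_lt {n k : ℕ} (h : n < k) : sinSqCoeff n k = 0 := by
  obtain _ | k := k
  · rfl
  obtain rfl | hn := Nat.eq_zero_or_pos n
  · simp [sinSqCoeff]
  · simp [sinSqCoeff, eval_sqNodePoly_eq_zero hn (by omega : n ≤ k)]

theorem sinSqCoeff_add_two_one (n : ℕ) :
    sinSqCoeff (n + 2) 1 = 2 + 2 * sinSqCoeff (n + 1) 1 - sinSqCoeff n 1 := by
  simp [sinSqCoeff, sqNodePoly]
  ring

theorem sinSqCoeff_add_two (n k : ℕ) :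
    sinSqCoeff (n + 2) (k + 2)
      = 2 * sinSqCoeff (n + 1) (k + 2) - sinSqCoeff (n + 1) (k + 1) - sinSqCoeff n (k + 2) := by
  have hfact : ((2 * (k + 1) + 2)! : ℝ) = (2 * k + 4) * (2 * k + 3) * (2 * k + 2)! := by
    rw [show 2 * (k + 1) + 2 = (2 * k + 2 + 1) + 1 by ring, Nat.factorial_succ, Nat.factorial_succ]
    push_cast; ring
  have h := sqNodePoly_secondDiff k ((n : ℝ) + 1)
  rw [show (n : ℝ) + 1 + 1 = (n + 2 : ℕ) by push_cast; ring, add_sub_cancel_right] at h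
  simp only [sinSqCoeff, hfact]
  push_cast at h ⊢
  field_simp
  linear_combination -(-1) ^ k * h

theorem coeff_sinSqPoly (n k : ℕ) : (sinSqPoly n).coeff k = sinSqCoeff n k := by
  induction n using Nat.twoStepInduction generalizing k with
  | zero => obtain _ | k := k <;> simp [sinSqPoly, sinSqCoeff]
  | one =>
    obtain _ | _ | k := k
    · simp [sinSqPoly, sinSqCoeff]
    · simp [sinSqPoly, sinSqCoeff, sqNodePoly]
    · rw [sinSqCoeff_eq_zero_of_lt (by omega)]
      simp [sinSqPoly, coeff_X]
  | more n ih₀ ih₁ =>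
    rw [sinSqPoly, sub_mul, coeff_sub, coeff_add, coeff_sub, coeff_ofNat_mul, coeff_ofNat_mul]
    obtain _ | _ | k := k
    · simp [ih₀, ih₁]
    · simp only [zero_add, coeff_X_mul, coeff_X_one, ih₀, ih₁, sinSqCoeff_add_two_one,
        sinSqCoeff_zero]
      ring
    · simp [coeff_X_mul, coeff_X, ih₀, ih₁, sinSqCoeff_add_two]

theorem sum_mul_eval_eq_coeff_one {ι R : Type*} [CommSemiring R] (s : Finset ι) (a x : ι → R)
    {N : ℕ} (h₁ : ∑ i ∈ s, a i * x i = 1)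
    (hm : ∀ m, 2 ≤ m → m ≤ N → ∑ i ∈ s, a i * x i ^ m = 0)
    {p : R[X]} (hp₀ : p.coeff 0 = 0) (hp : p.natDegree ≤ N) :
    ∑ i ∈ s, a i * p.eval (x i) = p.coeff 1 := by
  calc ∑ i ∈ s, a i * p.eval (x i)
      = ∑ m ∈ range (N + 1), p.coeff m * ∑ i ∈ s, a i * x i ^ m := by
        simp only [eval_eq_sum_range' (Nat.lt_succ_of_le hp), mul_sum]
        rw [sum_comm]
        exact sum_congr rfl fun i _ => sum_congr rfl fun m _ => by ring
    _ = p.coeff 1 := by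
        rw [sum_eq_single 1]
        · simp only [pow_one, h₁, mul_one]
        · intro m hmN hm₁
          obtain rfl | hm₂ : m = 0 ∨ 2 ≤ m := by omega
          · rw [hp₀, zero_mul]
          · rw [hm m hm₂ (by simpa [Nat.lt_succ_iff] using hmN), mul_zero]
        · intro h
          rw [coeff_eq_zero_of_natDegree_lt (by simp at h; omega), zero_mul]

noncomputable def symbolPoly {N : ℕ} (a : Fin N → ℝ) : ℝ[X] :=
  ∑ ν : Fin N, a ν • sinSqPoly (ν + 1)

theorem eval_symbolPoly {N : ℕ} (a : Fin N → ℝ) (θ : ℝ) :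
    (symbolPoly a).eval (2 - 2 * cos θ)
      = 2 * ∑ ν : Fin N, a ν * (1 - cos (((ν : ℕ) + 1) * θ)) := by
  simp only [symbolPoly, eval_finsetSum, eval_smul, eval_sinSqPoly, mul_sum, smul_eq_mul]
  push_cast
  exact sum_congr rfl fun ν _ => by ring

theorem coeff_symbolPoly {N : ℕ} (a : Fin N → ℝ) (k : ℕ) :
    (symbolPoly a).coeff k = ∑ ν : Fin N, a ν * sinSqCoeff (ν + 1) k := by
  simp [symbolPoly, finsetSum_coeff, coeff_sinSqPoly]

theorem natDegree_symbolPoly_le {N : ℕ} (a : Fin N → ℝ) : (symbolPoly a).natDegree ≤ N :=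
  natDegree_le_iff_coeff_eq_zero.2 fun k hk => by
    rw [coeff_symbolPoly]
    exact sum_eq_zero fun ν _ => by rw [sinSqCoeff_eq_zero_of_lt (by omega), mul_zero]

theorem coeff_symbolPoly_succ {N : ℕ} (a : Fin N → ℝ)
    (h₁ : ∑ ν : Fin N, a ν * ((ν : ℕ) + 1 : ℝ) ^ 2 = 1)
    (hm : ∀ m : ℕ, 2 ≤ m → m ≤ N → ∑ ν : Fin N, a ν * ((ν : ℕ) + 1 : ℝ) ^ (2 * m) = 0)
    {k : ℕ} (hk : k < N) :
    (symbolPoly a).coeff (k + 1) = 2 * (k ! : ℝ) ^ 2 / (2 * k + 2)! := by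
  have hmoment := sum_mul_eval_eq_coeff_one univ a (fun ν : Fin N => ((ν : ℕ) + 1 : ℝ) ^ 2) h₁
    (fun m hm₂ hmN => by simpa only [← pow_mul] using hm m hm₂ hmN)
    (p := X * sqNodePoly k) (coeff_X_mul_zero _) (by
      rw [natDegree_X_mul (sqNodePoly_monic k).ne_zero, natDegree_sqNodePoly]; omega)
  rw [coeff_X_mul, coeff_zero_eq_eval_zero, eval_zero_sqNodePoly] at hmoment
  calc (symbolPoly a).coeff (k + 1)
      = 2 * (-1) ^ k / (2 * k + 2)!
          * ∑ ν : Fin N, a ν * (X * sqNodePoly k).eval (((ν : ℕ) + 1 : ℝ) ^ 2) := by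
        rw [coeff_symbolPoly, mul_sum]
        refine sum_congr rfl fun ν _ => ?_
        simp only [sinSqCoeff, eval_mul, eval_X]
        push_cast
        ring
    _ = 2 * (k ! : ℝ) ^ 2 / (2 * k + 2)! := by
        have hsign : ((-1 : ℝ) ^ k) ^ 2 = 1 := by
          rw [← pow_mul, pow_mul', neg_one_sq, one_pow]
        rw [hmoment]
        linear_combination 2 * (k ! : ℝ) ^ 2 / (2 * k + 2)! * hsign

theorem symbol_pos (N : ℕ) (hN : 0 < N) (a : Fin N → ℝ)
    (h1 : ∑ ν : Fin N, a ν * ((ν : ℕ) + 1 : ℝ) ^ 2 = 1)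
    (hm : ∀ m : ℕ, 2 ≤ m → m ≤ N → ∑ ν : Fin N, a ν * ((ν : ℕ) + 1 : ℝ) ^ (2 * m) = 0)
    (θ : ℝ) (hθ : θ ∈ Set.Ioc 0 π) :
    0 < 2 * ∑ ν : Fin N, a ν * (1 - Real.cos (((ν : ℕ) + 1) * θ)) := by
  have hs : 0 < 2 - 2 * cos θ := by
    have := cos_lt_cos_of_nonneg_of_le_pi le_rfl hθ.2 hθ.1
    rw [cos_zero] at this
    linarith
  rw [← eval_symbolPoly, eval_eq_sum_range' (Nat.lt_succ_of_le (natDegree_symbolPoly_le a)),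
    sum_range_succ', coeff_symbolPoly a 0]
  simp only [sinSqCoeff_zero, mul_zero, sum_const_zero, zero_mul, add_zero]
  refine sum_pos (fun k hk => ?_) (nonempty_range_iff.2 hN.ne')
  rw [coeff_symbolPoly_succ a h1 hm (mem_range.1 hk)]
  positivity
end

section
/- For each j with 1 ≤ j ≤ N, if a_1,…,a_N satisfy Σ_{ν=1}^N a_ν ν² = 1 and Σ_{ν=1}^N a_ν ν^{2m} = 0 (m = 2,…,N), then (-1)^{j-1} Σ_{ν=1}^N a_ν T_ν^{(j)}(1) > 0, where T_ν denotes the ν-th Chebyshev polynomial of the first kind. -/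
open Polynomial Polynomial.Chebyshev

section ChebyshevAux
open Finset

lemma cheb_ode (n : ℤ) :
    (1 - X ^ 2) * derivative (derivative (T ℝ n)) =
      X * derivative (T ℝ n) - (n : ℝ[X]) ^ 2 * T ℝ n := by
  have h1 := T_derivative_eq_U (R := ℝ) n
  have h2 := add_one_mul_T_eq_poly_in_U (R := ℝ) (n - 1)
  rw [sub_add_cancel] at h2
  have h3 := congr_arg derivative h1
  rw [derivative_mul, derivative_intCast, zero_mul, zero_add] at h3
  linear_combination (norm := (push_cast; ring_nf))
    (1 - (X:ℝ[X])^2) * h3 - X * h1 + (n : ℝ[X]) * h2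

lemma cheb_iter (n : ℤ) (j : ℕ) :
    (1 - X ^ 2) * derivative^[j + 2] (T ℝ n) =
      (2 * (j : ℝ[X]) + 1) * (X * derivative^[j + 1] (T ℝ n)) +
        ((j : ℝ[X]) ^ 2 - (n : ℝ[X]) ^ 2) * derivative^[j] (T ℝ n) := by
  have hs : ∀ k : ℕ, derivative (derivative^[k] (T ℝ n)) = derivative^[k + 1] (T ℝ n) :=
    fun k => (Function.iterate_succ_apply' _ _ _).symm
  induction j with
  | zero =>
    have h := cheb_ode n
    simp only [Function.iterate_succ, Function.iterate_zero, Function.comp_apply, id_eq] at *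
    push_cast
    linear_combination h
  | succ j ih =>
    have h := congr_arg derivative ih
    simp only [derivative_mul, derivative_add, derivative_sub, derivative_one,
      derivative_X_pow, derivative_X, derivative_pow, derivative_natCast,
      derivative_intCast, derivative_ofNat, Nat.cast_ofNat, map_ofNat, pow_one, hs] at h
    simp only [show j + 2 + 1 = j + 1 + 2 from rfl, show j + 1 + 1 = j + 2 from rfl] at h
    push_cast at h ⊢
    linear_combination h

lemma f_rec (n : ℤ) (j : ℕ) :
    (2 * (j : ℝ) + 1) * (derivative^[j + 1] (T ℝ n)).eval 1 =
      ((n : ℝ) ^ 2 - (j : ℝ) ^ 2) * (derivative^[j] (T ℝ n)).eval 1 := by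
  have h := congr_arg (eval (1 : ℝ)) (cheb_iter n j)
  simp only [eval_mul, eval_add, eval_sub, eval_pow, eval_one, eval_X, eval_intCast,
    eval_natCast, eval_ofNat, Int.cast_pow] at h
  push_cast at h
  nlinarith [h]

lemma T_nat_eval_one : ∀ n : ℕ, (T ℝ (n : ℤ)).eval 1 = 1 := by
  intro n
  induction n using Nat.strong_induction_on with
  | _ n ih =>
    match n with
    | 0 => simp [T_zero]
    | 1 => simp [T_one]
    | (m + 2) =>
      have h := T_add_two ℝ (m : ℤ)
      have e : ((m : ℤ) + 2) = (((m + 2 : ℕ) : ℤ)) := by push_cast; ring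
      have e1 : ((m : ℤ) + 1) = (((m + 1 : ℕ) : ℤ)) := by push_cast; ring
      rw [e, e1] at h
      rw [h]
      simp only [eval_sub, eval_mul, eval_ofNat, eval_X,
        ih (m + 1) (by omega), ih m (by omega)]
      norm_num

lemma closed_form (n : ℕ) (j : ℕ) :
    (∏ k ∈ range j, (2 * (k : ℝ) + 1)) * (derivative^[j] (T ℝ (n : ℤ))).eval 1 =
      ∏ k ∈ range j, ((n : ℝ) ^ 2 - (k : ℝ) ^ 2) := by
  induction j with
  | zero => simpa using T_nat_eval_one n
  | succ j ih =>
    rw [prod_range_succ, prod_range_succ]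
    have h := f_rec (n : ℤ) j
    push_cast at h
    calc (∏ k ∈ range j, (2 * (k:ℝ) + 1)) * (2 * (j:ℝ) + 1) * (derivative^[j+1] (T ℝ (n:ℤ))).eval 1
        = (∏ k ∈ range j, (2 * (k:ℝ) + 1)) * ((2 * (j:ℝ) + 1) * (derivative^[j+1] (T ℝ (n:ℤ))).eval 1) := by ring
      _ = (∏ k ∈ range j, (2 * (k:ℝ) + 1)) * (((n:ℝ)^2 - (j:ℝ)^2) * (derivative^[j] (T ℝ (n:ℤ))).eval 1) := by rw [h]
      _ = ((∏ k ∈ range j, (2 * (k:ℝ) + 1)) * (derivative^[j] (T ℝ (n:ℤ))).eval 1) * ((n:ℝ)^2 - (j:ℝ)^2) := by ring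
      _ = (∏ k ∈ range j, ((n:ℝ)^2 - (k:ℝ)^2)) * ((n:ℝ)^2 - (j:ℝ)^2) := by rw [ih]

end ChebyshevAux

open Finset in
theorem chebyshev_deriv_sum_pos (N : ℕ) (hN : 0 < N) (a : Fin N → ℝ)
    (h1 : ∑ ν : Fin N, a ν * ((ν : ℕ) + 1 : ℝ) ^ 2 = 1)
    (hm : ∀ m : ℕ, 2 ≤ m → m ≤ N → ∑ ν : Fin N, a ν * ((ν : ℕ) + 1 : ℝ) ^ (2 * m) = 0)
    (j : ℕ) (hj1 : 1 ≤ j) (hjN : j ≤ N) :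
    0 < (-1 : ℝ) ^ (j - 1) *
        ∑ ν : Fin N, a ν * ((Polynomial.derivative^[j] (T ℝ ((ν : ℕ) + 1))).eval 1) := by
  obtain ⟨j', rfl⟩ : ∃ j', j = j' + 1 := ⟨j - 1, by omega⟩
  set j := j' + 1 with hjdef
  set d : ℝ := ∏ k ∈ range j, (2 * (k : ℝ) + 1) with hd
  have hdpos : 0 < d := prod_pos fun k _ => by positivity
  set q : ℝ[X] := ∏ k ∈ range j, (X - C ((k : ℝ) ^ 2)) with hqdef
  have hqeval : ∀ x : ℝ, q.eval x = ∏ k ∈ range j, (x - (k : ℝ) ^ 2) := by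
    intro x; simp [hqdef, eval_prod]
  have hdeg : q.natDegree < j + 1 := by
    have h := natDegree_prod_le (range j) (fun k => X - C ((k : ℝ) ^ 2))
    rw [← hqdef] at h
    simp only [natDegree_X_sub_C, sum_const, card_range, smul_eq_mul, mul_one] at h
    omega
  have key : ∀ ν : Fin N,
      (derivative^[j] (T ℝ ((ν : ℕ) + 1))).eval 1 = q.eval (((ν : ℕ) + 1 : ℝ) ^ 2) / d := by
    intro ν
    have hcast : (((ν : ℕ) + 1 : ℕ) : ℤ) = ((ν : ℕ) : ℤ) + 1 := by push_cast; ring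
    have h := closed_form ((ν : ℕ) + 1) j
    rw [hcast] at h
    push_cast at h
    rw [hqeval, eq_div_iff (ne_of_gt hdpos), mul_comm]
    exact h
  simp_rw [key, ← mul_div_assoc, ← sum_div]
  have hexp : ∀ x : ℝ, q.eval x = ∑ i ∈ range (j + 1), q.coeff i * x ^ i := fun x =>
    q.eval_eq_sum_range' hdeg x
  have hswap : (∑ ν : Fin N, a ν * q.eval (((ν : ℕ) + 1 : ℝ) ^ 2))
      = ∑ i ∈ range (j + 1), q.coeff i * ∑ ν : Fin N, a ν * ((ν : ℕ) + 1 : ℝ) ^ (2 * i) := by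
    simp_rw [hexp, mul_sum]
    rw [Finset.sum_comm]
    refine Finset.sum_congr rfl fun i _ => Finset.sum_congr rfl fun ν _ => ?_
    rw [pow_mul]; ring
  rw [hswap]
  have hc0 : q.coeff 0 = 0 := by
    rw [coeff_zero_eq_eval_zero, hqeval]
    exact prod_eq_zero (mem_range.2 (by omega : 0 < j)) (by norm_num)
  have hsum : (∑ i ∈ range (j + 1), q.coeff i * ∑ ν : Fin N, a ν * ((ν : ℕ) + 1 : ℝ) ^ (2 * i))
      = q.coeff 1 := by
    rw [Finset.sum_eq_single 1]
    · rw [show 2 * 1 = 2 from rfl, h1, mul_one]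
    · intro i hi hi1
      rcases Nat.lt_or_ge i 2 with h2 | h2
      · interval_cases i
        · rw [hc0, zero_mul]
        · omega
      · rw [hm i h2 (by have := mem_range.1 hi; omega), mul_zero]
    · intro h; exact absurd (mem_range.2 (by omega)) h
  rw [hsum]
  have hsplit : q = (∏ k ∈ range j', (X - C (((k : ℝ) + 1) ^ 2))) * X := by
    rw [hqdef, prod_range_succ']
    congr 1
    · exact prod_congr rfl fun k _ => by rw [Nat.cast_add, Nat.cast_one]
    · norm_num
  have hc1 : q.coeff 1 = (-1 : ℝ) ^ j' * ∏ k ∈ range j', ((k : ℝ) + 1) ^ 2 := by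
    rw [hsplit, coeff_mul_X, coeff_zero_eq_eval_zero, eval_prod]
    simp only [eval_sub, eval_X, eval_C]
    rw [show (∏ k ∈ range j', ((0 : ℝ) - ((k : ℝ) + 1) ^ 2))
        = ∏ k ∈ range j', (-1) * ((k : ℝ) + 1) ^ 2 from prod_congr rfl fun k _ => by ring]
    rw [prod_mul_distrib, prod_const, card_range]
  rw [hc1]
  have hj' : j - 1 = j' := rfl
  rw [hj']
  have hone : (-1 : ℝ) ^ j' * (-1 : ℝ) ^ j' = 1 := by
    rw [← pow_add]; exact Even.neg_one_pow ⟨j', rfl⟩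
  have hre : (-1 : ℝ) ^ j' * ((-1 : ℝ) ^ j' * (∏ k ∈ range j', ((k : ℝ) + 1) ^ 2) / d)
      = ((-1 : ℝ) ^ j' * (-1 : ℝ) ^ j') * ((∏ k ∈ range j', ((k : ℝ) + 1) ^ 2) / d) := by
    ring
  rw [hre, hone, one_mul]
  have : 0 < ∏ k ∈ range j', ((k : ℝ) + 1) ^ 2 := prod_pos fun k _ => by positivity
  positivity
end

section
/- Let ℓ ∈ ℕ, d ∈ ℕ, k ∈ ℤ with k ≥ ℓ - d + 1, and let H: ℝ^d → ℂ be smooth with H and all derivatives rapidly decreasing. In spherical coordinates define F_k(y) := -(ℓ / r^{d+k-ℓ}) ∫_0^r ρ^{d+k-ℓ-1} H(ρ, φ) dρ for y ≠ 0 (r = |y|). Then F_k satisfies the first-order PDE (ℓ - d - k) F_k(y) - Σ_{j=1}^d y_j ∂F_k/∂y_j (y) = ℓ H(y) for all y ≠ 0, F_k is continuous at the origin, and lim_{y→0} F_k(y) = -ℓ H(0)/(k + d - ℓ). -/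
set_option maxHeartbeats 1000000
set_option synthInstance.maxHeartbeats 400000

open Real MeasureTheory intervalIntegral

namespace FkAux

open Metric Set

variable {d : ℕ}

noncomputable def G (n : ℕ) (H : EuclideanSpace ℝ (Fin d) → ℂ)
    (y : EuclideanSpace ℝ (Fin d)) : ℂ :=
  ∫ t in (0:ℝ)..1, (t:ℂ)^n * H (t • y)

noncomputable def D (n : ℕ) (H : EuclideanSpace ℝ (Fin d) → ℂ)
    (y : EuclideanSpace ℝ (Fin d)) : EuclideanSpace ℝ (Fin d) →L[ℝ] ℂ :=
  ∫ t in (0:ℝ)..1, ((t:ℂ)^n * t) • fderiv ℝ H (t • y)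

theorem integrand_hasFDerivAt (n : ℕ) {H : EuclideanSpace ℝ (Fin d) → ℂ}
    (hHd : Differentiable ℝ H) (t : ℝ) (x : EuclideanSpace ℝ (Fin d)) :
    HasFDerivAt (fun x => (t:ℂ)^n * H (t • x)) (((t:ℂ)^n * t) • fderiv ℝ H (t • x)) x := by
  have h1 : HasFDerivAt (fun x : EuclideanSpace ℝ (Fin d) => t • x)
      (t • (ContinuousLinearMap.id ℝ (EuclideanSpace ℝ (Fin d)))) x :=
    (hasFDerivAt_id x).const_smul t
  have h2 := ((hHd (t • x)).hasFDerivAt.comp x h1)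
  have h3 := h2.const_mul ((t:ℂ)^n)
  refine h3.congr_fderiv ?_
  ext v
  simp [mul_smul, Complex.real_smul]

theorem G_hasFDerivAt (n : ℕ) {H : EuclideanSpace ℝ (Fin d) → ℂ}
    (hHsm : ContDiff ℝ (⊤ : ℕ∞) H) {C1 : ℝ} (hC1 : ∀ x, ‖fderiv ℝ H x‖ ≤ C1)
    (y : EuclideanSpace ℝ (Fin d)) :
    HasFDerivAt (G n H) (D n H y) y := by
  have hHd : Differentiable ℝ H := hHsm.differentiable (by simp)
  have hHc : Continuous H := hHsm.continuous
  have hH'c : Continuous (fderiv ℝ H) := hHsm.continuous_fderiv (by simp)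
  apply intervalIntegral.hasFDerivAt_integral_of_dominated_of_fderiv_le
    (F' := fun x t => ((t:ℂ)^n * t) • fderiv ℝ H (t • x)) (bound := fun _ => C1) (Metric.ball_mem_nhds y one_pos)
  · filter_upwards with x
    exact (((Complex.continuous_ofReal.pow n)).mul
      (hHc.comp ((continuous_id.smul continuous_const)))).aestronglyMeasurable
  · exact (((Complex.continuous_ofReal.pow n)).mul
      (hHc.comp ((continuous_id.smul continuous_const)))).intervalIntegrable _ _
  · exact (((Complex.continuous_ofReal.pow n).mul Complex.continuous_ofReal).smul
      (hH'c.comp ((continuous_id.smul continuous_const)))).aestronglyMeasurable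
  · filter_upwards with t ht x _
    refine le_trans (ContinuousLinearMap.opNorm_smul_le _ _) ?_
    have ht' : t ∈ Set.Ioc (0:ℝ) 1 := by
      simpa [Set.uIoc_of_le (zero_le_one (α := ℝ))] using ht
    have h01 : 0 < t ∧ t ≤ 1 := ⟨ht'.1, ht'.2⟩
    have htn : ‖(t:ℂ)^n * t‖ ≤ 1 := by
      rw [norm_mul, norm_pow, Complex.norm_real, Real.norm_eq_abs]
      have : |t| ≤ 1 := by rw [abs_of_pos h01.1]; exact h01.2
      calc |t|^n * |t| ≤ 1^n * 1 :=
            mul_le_mul (pow_le_pow_left₀ (abs_nonneg t) this n) this (abs_nonneg t) (by norm_num)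
        _ = 1 := by norm_num
    calc ‖(t:ℂ)^n * t‖ * ‖fderiv ℝ H (t • x)‖ ≤ 1 * C1 :=
          mul_le_mul htn (hC1 _) (norm_nonneg _) (by norm_num)
      _ = C1 := one_mul _
  · exact intervalIntegrable_const
  · filter_upwards with t ht x _
    exact integrand_hasFDerivAt n hHd t x

theorem D_apply (n : ℕ) {H : EuclideanSpace ℝ (Fin d) → ℂ}
    (hHsm : ContDiff ℝ (⊤ : ℕ∞) H) (y : EuclideanSpace ℝ (Fin d)) :
    D n H y y = H y - ((n:ℂ)+1) * G n H y := by
  have hHd : Differentiable ℝ H := hHsm.differentiable (by simp)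
  have hH'c : Continuous (fderiv ℝ H) := hHsm.continuous_fderiv (by simp)
  have hvc : Continuous (fun t : ℝ => (fderiv ℝ H (t • y)) y) := by
    have : Continuous (fun t : ℝ => fderiv ℝ H (t • y)) :=
      hH'c.comp (continuous_id.smul continuous_const)
    exact (ContinuousLinearMap.apply ℝ ℂ y).continuous.comp this
  have happ : D n H y y = ∫ t in (0:ℝ)..1, ((t:ℂ)^n * t) * ((fderiv ℝ H (t • y)) y) := by
    unfold D
    rw [intervalIntegral.integral_of_le zero_le_one,
      intervalIntegral.integral_of_le zero_le_one]
    rw [ContinuousLinearMap.integral_apply]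
    · simp
    · apply Continuous.integrableOn_Ioc
      exact ((Complex.continuous_ofReal.pow n).mul Complex.continuous_ofReal).smul
        (hH'c.comp (continuous_id.smul continuous_const))
  have hu : ∀ t ∈ uIcc (0:ℝ) 1,
      HasDerivAt (fun s : ℝ => ((s:ℂ))^(n+1)) (((n:ℂ)+1) * (t:ℂ)^n) t := by
    intro t _
    have h := (hasDerivAt_pow (n+1) ((t:ℂ))).comp_ofReal
    simpa using h
  have hv : ∀ t ∈ uIcc (0:ℝ) 1,
      HasDerivAt (fun s : ℝ => H (s • y)) ((fderiv ℝ H (t • y)) y) t := by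
    intro t _
    have h1 : HasDerivAt (fun s : ℝ => s • y) y t := by
      simpa using (hasDerivAt_id t).smul_const y
    exact (hHd (t • y)).hasFDerivAt.comp_hasDerivAt t h1
  have hint1 : IntervalIntegrable (fun t : ℝ => ((n:ℂ)+1) * (t:ℂ)^n) volume 0 1 :=
    (continuous_const.mul (Complex.continuous_ofReal.pow n)).intervalIntegrable _ _
  have hint2 : IntervalIntegrable (fun t : ℝ => (fderiv ℝ H (t • y)) y) volume 0 1 :=
    hvc.intervalIntegrable _ _
  have hibp := intervalIntegral.integral_mul_deriv_eq_deriv_mul hu hv hint1 hint2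
  rw [happ]
  simp_rw [← pow_succ]
  rw [hibp]
  have : (∫ t in (0:ℝ)..1, (((n:ℂ)+1) * (t:ℂ)^n) * H (t • y))
      = ((n:ℂ)+1) * G n H y := by
    unfold G
    rw [← intervalIntegral.integral_const_mul]
    congr 1; funext t; ring
  rw [this]
  simp

theorem G_zero (n : ℕ) (H : EuclideanSpace ℝ (Fin d) → ℂ) :
    G n H 0 = H 0 / ((n:ℂ)+1) := by
  unfold G
  simp only [smul_zero]
  rw [intervalIntegral.integral_mul_const]
  have h1 : (∫ t in (0:ℝ)..1, (t:ℂ)^n) = (((n:ℝ)+1)⁻¹ : ℝ) := by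
    have h2 : ∀ t : ℝ, ((t:ℂ))^n = ((t^n : ℝ) : ℂ) := fun t => by push_cast; ring
    simp_rw [h2]
    rw [intervalIntegral.integral_ofReal, integral_pow]
    norm_num
  rw [h1]
  have hne : ((n:ℂ)+1) ≠ 0 := Nat.cast_add_one_ne_zero n
  push_cast
  field_simp

end FkAux

theorem Fk_pde_and_limit (d ℓ : ℕ) (hd : 0 < d) (hℓ : 0 < ℓ) (k : ℤ)
    (hk : (ℓ : ℤ) - d + 1 ≤ k)
    (H : EuclideanSpace ℝ (Fin d) → ℂ) (hHsm : ContDiff ℝ (⊤ : ℕ∞) H)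
    (hHdec : ∀ (n : ℕ) (p : ℝ), 0 < p → ∃ C : ℝ,
      ∀ y : EuclideanSpace ℝ (Fin d), ‖iteratedFDeriv ℝ n H y‖ ≤ C * (1 + ‖y‖) ^ (-p))
    (F : EuclideanSpace ℝ (Fin d) → ℂ)
    (hF : ∀ y : EuclideanSpace ℝ (Fin d), y ≠ 0 →
      F y = -(ℓ : ℂ) / ((‖y‖ : ℂ) ^ ((d : ℤ) + k - ℓ)) *
        ∫ ρ in (0 : ℝ)..‖y‖, (ρ : ℂ) ^ ((d : ℤ) + k - ℓ - 1) * H (ρ • (‖y‖⁻¹ • y))) :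
    (∀ y : EuclideanSpace ℝ (Fin d), y ≠ 0 →
      DifferentiableAt ℝ F y ∧
      ((ℓ : ℂ) - d - k) * F y -
          (∑ j : Fin d, (y j : ℂ) * fderiv ℝ F y (EuclideanSpace.single j 1))
        = (ℓ : ℂ) * H y) ∧
    Filter.Tendsto F (nhdsWithin 0 {0}ᶜ)
      (nhds (-(ℓ : ℂ) * H 0 / ((k : ℂ) + d - ℓ))) := by
  obtain ⟨n, hn⟩ : ∃ n : ℕ, (d:ℤ) + k - ℓ - 1 = (n:ℤ) := ⟨((d:ℤ)+k-ℓ-1).toNat, by omega⟩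
  have hHd : Differentiable ℝ H := hHsm.differentiable (by simp)
  obtain ⟨C, hC⟩ := hHdec 1 1 one_pos
  have hC1 : ∀ x, ‖fderiv ℝ H x‖ ≤ max C 0 := by
    intro x
    have h0 : ‖fderiv ℝ H x‖ = ‖iteratedFDeriv ℝ 1 H x‖ := by
      rw [← norm_iteratedFDeriv_fderiv, norm_iteratedFDeriv_zero]
    have h2 : (0:ℝ) ≤ (1 + ‖x‖) ^ (-(1:ℝ)) := Real.rpow_nonneg (by positivity) _
    have h3 : (1 + ‖x‖) ^ (-(1:ℝ)) ≤ 1 :=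
      Real.rpow_le_one_of_one_le_of_nonpos (by linarith [norm_nonneg x]) (by norm_num)
    calc ‖fderiv ℝ H x‖ ≤ C * (1+‖x‖)^(-(1:ℝ)) := h0 ▸ hC x
      _ ≤ max C 0 * 1 := mul_le_mul (le_max_left _ _) h3 h2 (le_max_right _ _)
      _ = max C 0 := mul_one _
  have hGd : ∀ y, HasFDerivAt (FkAux.G n H) (FkAux.D n H y) y :=
    fun y => FkAux.G_hasFDerivAt n hHsm hC1 y
  have hFG : ∀ y : EuclideanSpace ℝ (Fin d), y ≠ 0 → F y = -(ℓ:ℂ) * FkAux.G n H y := by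
    intro y hy
    have hR : (0:ℝ) < ‖y‖ := norm_pos_iff.mpr hy
    have hsub : (∫ ρ in (0:ℝ)..‖y‖, (ρ:ℂ) ^ ((d:ℤ)+k-ℓ-1) * H (ρ • (‖y‖⁻¹ • y)))
        = ((‖y‖:ℂ))^(n+1) * FkAux.G n H y := by
      have e1 : ∀ ρ : ℝ, (ρ:ℂ) ^ ((d:ℤ)+k-ℓ-1) = (ρ:ℂ)^n := by
        intro ρ; rw [hn, zpow_natCast]
      simp_rw [e1]
      have e2 : (∫ ρ in (0:ℝ)..‖y‖, (ρ:ℂ)^n * H (ρ • (‖y‖⁻¹ • y)))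
          = ‖y‖ • ∫ t in (0:ℝ)..1, ((‖y‖*t : ℝ):ℂ)^n * H ((‖y‖*t) • (‖y‖⁻¹ • y)) := by
        rw [intervalIntegral.smul_integral_comp_mul_left
          (fun ρ : ℝ => (ρ:ℂ)^n * H (ρ • (‖y‖⁻¹ • y))) ‖y‖]
        norm_num
      rw [e2]
      have e3 : ∀ t : ℝ, ((‖y‖*t : ℝ):ℂ)^n * H ((‖y‖*t) • (‖y‖⁻¹ • y))
          = ((‖y‖:ℂ))^n * ((t:ℂ)^n * H (t • y)) := by
        intro t
        have hsm : (‖y‖*t) • (‖y‖⁻¹ • y) = t • y := by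
          rw [smul_smul, mul_comm (‖y‖) t, mul_assoc, mul_inv_cancel₀ (ne_of_gt hR), mul_one]
        rw [hsm]; push_cast; ring
      simp_rw [e3]
      rw [intervalIntegral.integral_const_mul]
      unfold FkAux.G
      rw [Complex.real_smul]
      ring
    rw [hF y hy, hsub]
    have hz : ((‖y‖:ℂ)) ^ ((d:ℤ)+k-ℓ) = ((‖y‖:ℂ))^(n+1) := by
      have h4 : (d:ℤ)+k-ℓ = ((n+1 : ℕ) : ℤ) := by push_cast; omega
      rw [h4, zpow_natCast]
    rw [hz]
    have hRne : ((‖y‖:ℂ))^(n+1) ≠ 0 := pow_ne_zero _ (by exact_mod_cast ne_of_gt hR)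
    field_simp
  constructor
  · intro y hy
    have hmem : {(0:EuclideanSpace ℝ (Fin d))}ᶜ ∈ nhds y :=
      isOpen_compl_singleton.mem_nhds (by simpa using hy)
    have hEq : F =ᶠ[nhds y] fun x => -(ℓ:ℂ) * FkAux.G n H x := by
      filter_upwards [hmem] with x hx
      exact hFG x hx
    have hF' : HasFDerivAt F ((-(ℓ:ℂ)) • FkAux.D n H y) y :=
      ((hGd y).const_mul (-(ℓ:ℂ))).congr_of_eventuallyEq hEq
    refine ⟨hF'.differentiableAt, ?_⟩
    have hfd : fderiv ℝ F y = (-(ℓ:ℂ)) • FkAux.D n H y := hF'.fderiv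
    have hyrep : ∑ j, (y j) • (EuclideanSpace.single j (1:ℝ)) = y := by
      have h := (EuclideanSpace.basisFun (Fin d) ℝ).sum_repr y
      simpa [EuclideanSpace.basisFun_apply, EuclideanSpace.basisFun_repr] using h
    have hsum : ∀ L : EuclideanSpace ℝ (Fin d) →L[ℝ] ℂ,
        (∑ j, (y j : ℂ) * L (EuclideanSpace.single j 1)) = L y := by
      intro L
      conv_rhs => rw [← hyrep]
      rw [map_sum]
      refine Finset.sum_congr rfl fun j _ => ?_
      rw [L.map_smul, Complex.real_smul]
    rw [hsum, hfd]
    simp only [ContinuousLinearMap.smul_apply, smul_eq_mul]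
    rw [FkAux.D_apply n hHsm y, hFG y hy]
    have h5 : ((ℓ:ℤ) - d - k : ℤ) = (-((n:ℤ)+1) : ℤ) := by omega
    have hcoef : ((ℓ:ℂ) - d - k) = -((n:ℂ)+1) := by
      have h6 : (((ℓ:ℤ) - d - k : ℤ) : ℂ) = ((-((n:ℤ)+1) : ℤ) : ℂ) := by rw [h5]
      push_cast at h6
      exact h6
    rw [hcoef]
    ring
  · have hGc : ContinuousAt (FkAux.G n H) 0 := (hGd 0).differentiableAt.continuousAt
    have h1 : Filter.Tendsto (fun y => -(ℓ:ℂ) * FkAux.G n H y) (nhdsWithin 0 {0}ᶜ)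
        (nhds (-(ℓ:ℂ) * FkAux.G n H 0)) :=
      ((continuousAt_const.mul hGc).tendsto).mono_left nhdsWithin_le_nhds
    have h2 : Filter.Tendsto F (nhdsWithin 0 {0}ᶜ) (nhds (-(ℓ:ℂ) * FkAux.G n H 0)) := by
      apply h1.congr'
      filter_upwards [self_mem_nhdsWithin] with x hx
      exact (hFG x (by simpa using hx)).symm
    have h3 : -(ℓ:ℂ) * FkAux.G n H 0 = -(ℓ : ℂ) * H 0 / ((k : ℂ) + d - ℓ) := by
      rw [FkAux.G_zero]
      have h7 : (((k:ℤ) + d - ℓ : ℤ) : ℂ) = (((n:ℤ)+1 : ℤ) : ℂ) := by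
        rw [show ((k:ℤ) + d - ℓ : ℤ) = ((n:ℤ)+1 : ℤ) by omega]
      push_cast at h7
      rw [h7, mul_div_assoc]
    rw [← h3]
    exact h2
end

section
/- Let ℓ ≥ d and 0 ≤ k ≤ ℓ - d, and let H: ℝ^d → ℂ be smooth with H and all derivatives rapidly decreasing. In spherical coordinates define F_k(y) := ℓ r^{ℓ-d-k} ∫_r^∞ H(ρ,φ)/ρ^{ℓ-d-k+1} dρ for y ≠ 0. Then F_k solves (ℓ - d - k)F_k(y) - Σ_{j=1}^d y_j ∂F_k/∂y_j(y) = ℓ H(y) on ℝ^d \ {0} and F_k(y) → 0 as |y| → ∞. -/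
open Real MeasureTheory Filter Set

namespace FkAux

variable {d : ℕ}

noncomputable def h (H : EuclideanSpace ℝ (Fin d) → ℂ) (m : ℕ)
    (y : EuclideanSpace ℝ (Fin d)) (u : ℝ) : ℂ :=
  H (u • y) / (u : ℂ) ^ (m + 1)

noncomputable def ψ (H : EuclideanSpace ℝ (Fin d) → ℂ) (m : ℕ)
    (y : EuclideanSpace ℝ (Fin d)) (s : ℝ) : ℂ :=
  ∫ u in Set.Ioi s, h H m y u

lemma h_contOn (H : EuclideanSpace ℝ (Fin d) → ℂ) (hH : Continuous H) (m : ℕ)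
    (y : EuclideanSpace ℝ (Fin d)) : ContinuousOn (h H m y) (Ioi (0:ℝ)) := by
  apply ContinuousOn.div
  · exact (hH.comp (show Continuous fun u : ℝ => u • y from continuous_id.smul continuous_const)).continuousOn
  · exact (Complex.continuous_ofReal.pow _).continuousOn
  · intro u hu
    exact pow_ne_zero _ (Complex.ofReal_ne_zero.mpr (ne_of_gt hu))

lemma h_norm_le {H : EuclideanSpace ℝ (Fin d) → ℂ} {C : ℝ}
    (hC : ∀ z, ‖H z‖ ≤ C * (1 + ‖z‖)⁻¹) (m : ℕ)
    {y : EuclideanSpace ℝ (Fin d)} (hy : y ≠ 0) {u : ℝ} (hu : 0 < u) :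
    ‖h H m y u‖ ≤ (C / ‖y‖) * u ^ (-((m:ℝ) + 2)) := by
  have hyn : 0 < ‖y‖ := norm_pos_iff.mpr hy
  have hC0 : 0 ≤ C := by
    have := (norm_nonneg (H 0)).trans (hC 0)
    simpa using this
  have hnorm : ‖h H m y u‖ = ‖H (u • y)‖ / u ^ (m + 1) := by
    rw [h, norm_div, norm_pow, Complex.norm_real, Real.norm_eq_abs, abs_of_pos hu]
  have h1 : ‖H (u • y)‖ ≤ C * (u * ‖y‖)⁻¹ := by
    refine (hC (u • y)).trans ?_
    have h2 : u * ‖y‖ ≤ 1 + ‖u • y‖ := by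
      rw [norm_smul, Real.norm_eq_abs, abs_of_pos hu]; linarith
    exact mul_le_mul_of_nonneg_left
      (inv_anti₀ (by positivity) h2) hC0
  have hup : (0:ℝ) < u ^ (m + 1) := by positivity
  rw [hnorm]
  have key : C * (u * ‖y‖)⁻¹ / u ^ (m + 1) = (C / ‖y‖) * ((u ^ (m + 2))⁻¹) := by
    rw [pow_succ u (m + 1), mul_inv, mul_inv, div_eq_mul_inv, div_eq_mul_inv]
    ring
  calc ‖H (u • y)‖ / u ^ (m + 1) ≤ C * (u * ‖y‖)⁻¹ / u ^ (m + 1) := by gcongr ?_ / _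
    _ = (C / ‖y‖) * ((u ^ (m + 2))⁻¹) := key
    _ = (C / ‖y‖) * u ^ (-((m:ℝ) + 2)) := by
        congr 1
        rw [show -((m:ℝ) + 2) = -((m + 2 : ℕ) : ℝ) by push_cast; ring,
          Real.rpow_neg hu.le, Real.rpow_natCast]


lemma h_integrableOn {H : EuclideanSpace ℝ (Fin d) → ℂ} (hH : Continuous H) {C : ℝ}
    (hC : ∀ z, ‖H z‖ ≤ C * (1 + ‖z‖)⁻¹) (m : ℕ)
    {y : EuclideanSpace ℝ (Fin d)} (hy : y ≠ 0) {c : ℝ} (hc : 0 < c) :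
    IntegrableOn (h H m y) (Ioi c) := by
  have hmeas : AEStronglyMeasurable (h H m y) (volume.restrict (Ioi c)) :=
    ((h_contOn H hH m y).mono (Ioi_subset_Ioi hc.le)).aestronglyMeasurable measurableSet_Ioi
  refine Integrable.mono' (g := fun u => (C / ‖y‖) * u ^ (-((m:ℝ)+2))) ?_ hmeas ?_
  · exact ((integrableOn_Ioi_rpow_of_lt (show -((m:ℝ)+2) < -1 by
      push_cast; linarith [Nat.cast_nonneg (α := ℝ) m]) hc).const_mul (C / ‖y‖))
  · rw [ae_restrict_iff' measurableSet_Ioi]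
    filter_upwards with u hu
    exact h_norm_le hC m hy (hc.trans hu)

lemma h_scale_eq {H : EuclideanSpace ℝ (Fin d) → ℂ} (m : ℕ)
    {y : EuclideanSpace ℝ (Fin d)} {s u : ℝ} (hs : 0 < s) (hu : 0 < u) :
    h H m (s • y) u = (s : ℂ) ^ (m + 1) * h H m y (s * u) := by
  have h1 : u • s • y = (s * u) • y := by rw [smul_smul, mul_comm]
  have hu0 : (u : ℂ) ≠ 0 := Complex.ofReal_ne_zero.mpr hu.ne'
  have hs0 : (s : ℂ) ≠ 0 := Complex.ofReal_ne_zero.mpr hs.ne'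
  rw [h, h, h1]
  rw [show ((s * u : ℝ) : ℂ) = (s : ℂ) * u by push_cast; ring, mul_pow]
  field_simp

lemma int_scale {H : EuclideanSpace ℝ (Fin d) → ℂ} (m : ℕ)
    (y : EuclideanSpace ℝ (Fin d)) {s : ℝ} (hs : 0 < s) (c : ℝ) :
    ∫ u in Ioi c, h H m y (s * u) = s⁻¹ • ψ H m y (s * c) :=
  integral_comp_mul_left_Ioi (h H m y) c hs

lemma G_scale {H : EuclideanSpace ℝ (Fin d) → ℂ} (m : ℕ)
    (y : EuclideanSpace ℝ (Fin d)) {s : ℝ} (hs : 0 < s) :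
    ψ H m (s • y) 1 = (s : ℂ) ^ m * ψ H m y s := by
  have hs0 : (s : ℂ) ≠ 0 := Complex.ofReal_ne_zero.mpr hs.ne'
  have h1 : ψ H m (s • y) 1 = ∫ u in Ioi (1:ℝ), (s : ℂ) ^ (m + 1) * h H m y (s * u) := by
    refine setIntegral_congr_fun measurableSet_Ioi fun u hu => ?_
    exact h_scale_eq m hs (lt_trans one_pos hu)
  rw [h1, MeasureTheory.integral_const_mul, int_scale m y hs 1, mul_one,
    Complex.real_smul, Complex.ofReal_inv, pow_succ]
  field_simp


lemma psi_hasDerivAt {H : EuclideanSpace ℝ (Fin d) → ℂ} (hH : Continuous H) {C : ℝ}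
    (hC : ∀ z, ‖H z‖ ≤ C * (1 + ‖z‖)⁻¹) (m : ℕ)
    {y : EuclideanSpace ℝ (Fin d)} (hy : y ≠ 0) :
    HasDerivAt (ψ H m y) (-(h H m y 1)) 1 := by
  have hint : IntegrableOn (h H m y) (Ioi (1/2 : ℝ)) := h_integrableOn hH hC m hy one_half_pos
  have hkey : ∀ s ∈ Ioi (1/2 : ℝ),
      ψ H m y s = ψ H m y (1/2) - ∫ u in (1/2 : ℝ)..s, h H m y u := by
    intro s hs
    have hs' : (1/2 : ℝ) ≤ s := le_of_lt hs
    have hsplit : ψ H m y (1/2) = (∫ u in Ioc (1/2 : ℝ) s, h H m y u) + ψ H m y s := by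
      rw [ψ, ψ, ← setIntegral_union (Ioc_disjoint_Ioi le_rfl) measurableSet_Ioi
        (hint.mono_set Ioc_subset_Ioi_self) (hint.mono_set (Ioi_subset_Ioi hs'))]
      rw [Ioc_union_Ioi_eq_Ioi hs']
    rw [intervalIntegral.integral_of_le hs']
    rw [hsplit]; ring
  have hd2 : HasDerivAt (fun s => ψ H m y (1/2) - ∫ u in (1/2 : ℝ)..s, h H m y u)
      (-(h H m y 1)) 1 := by
    have hii : IntervalIntegrable (h H m y) volume (1/2 : ℝ) 1 :=
      (intervalIntegrable_iff_integrableOn_Ioc_of_le one_half_lt_one.le).mpr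
        (hint.mono_set Ioc_subset_Ioi_self)
    have hmeas : StronglyMeasurableAtFilter (h H m y) (nhds (1:ℝ)) volume :=
      ⟨Ioi (0:ℝ), isOpen_Ioi.mem_nhds (Set.mem_Ioi.mpr one_pos),
        ((h_contOn H hH m y).aestronglyMeasurable measurableSet_Ioi)⟩
    have hca : ContinuousAt (h H m y) 1 :=
      (h_contOn H hH m y).continuousAt (isOpen_Ioi.mem_nhds (Set.mem_Ioi.mpr one_pos))
    exact (intervalIntegral.integral_hasDerivAt_right hii hmeas hca).const_sub _
  refine hd2.congr_of_eventuallyEq ?_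
  filter_upwards [isOpen_Ioi.mem_nhds (show (1/2:ℝ) < 1 by norm_num)] with s hs
  exact hkey s hs

set_option maxHeartbeats 1000000 in
lemma G_hasFDerivAt_s15 {H : EuclideanSpace ℝ (Fin d) → ℂ} (hHsm : ContDiff ℝ (⊤ : ℕ∞) H) {C₁ : ℝ}
    (hC₁ : ∀ z, ‖fderiv ℝ H z‖ ≤ C₁ * ((1 + ‖z‖) ^ 2)⁻¹) (m : ℕ)
    {y : EuclideanSpace ℝ (Fin d)} (hy : y ≠ 0)
    (hint : IntegrableOn (h H m y) (Ioi (1:ℝ))) :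
    ∃ L : EuclideanSpace ℝ (Fin d) →L[ℝ] ℂ,
      HasFDerivAt (fun x => ψ H m x 1) L y := by
  have hC₁0 : 0 ≤ C₁ := by
    have := (norm_nonneg (fderiv ℝ H 0)).trans (hC₁ 0)
    simpa using this
  set F' : EuclideanSpace ℝ (Fin d) → ℝ → (EuclideanSpace ℝ (Fin d) →L[ℝ] ℂ) :=
    fun x u => ((u:ℂ) ^ (m+1))⁻¹ • (u • fderiv ℝ H (u • x)) with hF'
  have hyn : 0 < ‖y‖ := norm_pos_iff.mpr hy
  set ε : ℝ := ‖y‖ / 2 with hε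
  have hε0 : 0 < ε := by positivity
  have hder : ∀ (u : ℝ) (x : EuclideanSpace ℝ (Fin d)),
      HasFDerivAt (fun x => h H m x u) (F' x u) x := by
    intro u x
    have h1 : HasFDerivAt (fun x : EuclideanSpace ℝ (Fin d) => u • x)
        (u • ContinuousLinearMap.id ℝ (EuclideanSpace ℝ (Fin d))) x :=
      (hasFDerivAt_id x).const_smul u
    have h2 := (hHsm.differentiable (by simp) (u • x)).hasFDerivAt
    have h3 := h2.comp x h1
    have h4 : (fderiv ℝ H (u • x)).comp
        (u • ContinuousLinearMap.id ℝ (EuclideanSpace ℝ (Fin d)))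
        = u • fderiv ℝ H (u • x) := by
      ext v; simp
    rw [h4] at h3
    have h5 := h3.const_smul (((u:ℂ) ^ (m+1))⁻¹)
    have h6 : (fun x : EuclideanSpace ℝ (Fin d) => h H m x u)
        = fun x => ((u:ℂ) ^ (m+1))⁻¹ • (H ∘ HSMul.hSMul u) x := by
      funext x
      simp only [h, Function.comp_apply, smul_eq_mul, div_eq_inv_mul]
    rw [h6]
    exact h5
  have hcf : Continuous (fderiv ℝ H) := hHsm.continuous_fderiv (by simp)
  have hF'meas : AEStronglyMeasurable (F' y) (volume.restrict (Ioi (1:ℝ))) := by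
    refine ContinuousOn.aestronglyMeasurable ?_ measurableSet_Ioi
    refine ContinuousOn.smul (f := fun u : ℝ => ((u:ℂ) ^ (m+1))⁻¹)
      (g := fun u : ℝ => u • fderiv ℝ H (u • y)) ?_ ?_
    · apply ContinuousOn.inv₀
      · exact (Complex.continuous_ofReal.pow _).continuousOn
      · intro u hu
        exact pow_ne_zero _ (Complex.ofReal_ne_zero.mpr (lt_trans one_pos hu).ne')
    · exact (continuous_id.smul (hcf.comp
        (show Continuous fun u : ℝ => u • y from continuous_id.smul
          continuous_const))).continuousOn
  have hbound : ∀ u ∈ Ioi (1:ℝ), ∀ x ∈ Metric.ball y ε,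
      ‖F' x u‖ ≤ (C₁ / ε ^ 2) * u ^ (-2 : ℝ) := by
    intro u hu x hx
    show ‖((u:ℂ) ^ (m+1))⁻¹ • (u • fderiv ℝ H (u • x))‖ ≤ (C₁ / ε ^ 2) * u ^ (-2 : ℝ)
    have hu1 : (1:ℝ) < u := hu
    have hu0 : (0:ℝ) < u := lt_trans one_pos hu1
    have hxn : ε ≤ ‖x‖ := by
      have h7 : ‖y‖ - ‖x‖ ≤ ‖x - y‖ := by
        have := norm_sub_norm_le y x
        rwa [norm_sub_rev] at this
      have hd : ‖x - y‖ < ε := by rw [← dist_eq_norm]; exact hx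
      rw [hε] at hd ⊢
      linarith
    have hnF' : ‖((u:ℂ) ^ (m+1))⁻¹ • (u • fderiv ℝ H (u • x))‖
        ≤ (u ^ (m+1))⁻¹ * (u * ‖fderiv ℝ H (u • x)‖) := by
      have e1 : ‖((u:ℂ) ^ (m+1))⁻¹ • (u • fderiv ℝ H (u • x))‖
          ≤ ‖((u:ℂ) ^ (m+1))⁻¹‖ * ‖u • fderiv ℝ H (u • x)‖ :=
        ContinuousLinearMap.opNorm_smul_le _ _
      have e2 : ‖u • fderiv ℝ H (u • x)‖ ≤ ‖u‖ * ‖fderiv ℝ H (u • x)‖ :=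
        ContinuousLinearMap.opNorm_smul_le _ _
      have e3 : ‖((u:ℂ) ^ (m+1))⁻¹‖ = (u ^ (m+1))⁻¹ := by
        rw [norm_inv, norm_pow, Complex.norm_real, Real.norm_eq_abs, abs_of_pos hu0]
      rw [e3] at e1
      refine e1.trans ?_
      rw [Real.norm_eq_abs, abs_of_pos hu0] at e2
      exact mul_le_mul_of_nonneg_left e2 (by positivity)
    have hfb : ‖fderiv ℝ H (u • x)‖ ≤ C₁ * ((u * ε) ^ 2)⁻¹ := by
      refine (hC₁ (u • x)).trans ?_
      have h2 : u * ε ≤ 1 + ‖u • x‖ := by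
        rw [norm_smul, Real.norm_eq_abs, abs_of_pos hu0]
        nlinarith [mul_le_mul_of_nonneg_left hxn hu0.le]
      have h3 : (u * ε) ^ 2 ≤ (1 + ‖u • x‖) ^ 2 :=
        pow_le_pow_left₀ (by positivity) h2 2
      exact mul_le_mul_of_nonneg_left (inv_anti₀ (by positivity) h3) hC₁0
    have hum : u ≤ u ^ (m+1) := le_self_pow₀ hu1.le (Nat.succ_ne_zero m)
    have hrp : u ^ (-2:ℝ) = (u ^ 2)⁻¹ := by
      rw [show (-2:ℝ) = -((2:ℕ):ℝ) by norm_num, Real.rpow_neg hu0.le, Real.rpow_natCast]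
    rw [hrp]
    refine hnF'.trans ?_
    have key : (u ^ (m+1))⁻¹ * (u * (C₁ * ((u * ε) ^ 2)⁻¹)) ≤ (C₁ / ε ^ 2) * (u ^ 2)⁻¹ := by
      have e1 : (u ^ (m+1))⁻¹ * (u * (C₁ * ((u * ε) ^ 2)⁻¹))
          = (u / u ^ (m+1)) * (C₁ / ε ^ 2) * (u ^ 2)⁻¹ := by
        rw [mul_pow, mul_inv, div_eq_mul_inv, div_eq_mul_inv]
        ring
      rw [e1]
      have e2 : u / u ^ (m+1) ≤ 1 := by
        rw [div_le_one (by positivity)]; exact hum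
      have : (u / u ^ (m+1)) * (C₁ / ε ^ 2) ≤ 1 * (C₁ / ε ^ 2) :=
        mul_le_mul_of_nonneg_right e2 (by positivity)
      calc (u / u ^ (m+1)) * (C₁ / ε ^ 2) * (u ^ 2)⁻¹
          ≤ 1 * (C₁ / ε ^ 2) * (u ^ 2)⁻¹ := by
            exact mul_le_mul_of_nonneg_right this (by positivity)
        _ = (C₁ / ε ^ 2) * (u ^ 2)⁻¹ := by ring
    refine le_trans ?_ key
    have : u * ‖fderiv ℝ H (u • x)‖ ≤ u * (C₁ * ((u * ε) ^ 2)⁻¹) :=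
      mul_le_mul_of_nonneg_left hfb hu0.le
    exact mul_le_mul_of_nonneg_left this (by positivity)
  have hbint : Integrable (fun u : ℝ => (C₁ / ε ^ 2) * u ^ (-2:ℝ))
      (volume.restrict (Ioi (1:ℝ))) :=
    (integrableOn_Ioi_rpow_of_lt (by norm_num) one_pos).const_mul _
  refine ⟨∫ u in Ioi (1:ℝ), F' y u, ?_⟩
  have := hasFDerivAt_integral_of_dominated_of_fderiv_le (μ := volume.restrict (Ioi (1:ℝ)))
    (F := fun x u => h H m x u) (F' := F') (x₀ := y)
    (bound := fun u => (C₁ / ε ^ 2) * u ^ (-2:ℝ)) (Metric.ball_mem_nhds y hε0)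
    ?_ hint ?_ ?_ hbint ?_
  · exact this
  · filter_upwards with x
    exact ((h_contOn H hHsm.continuous m x).mono (Ioi_subset_Ioi zero_le_one)).aestronglyMeasurable
      measurableSet_Ioi
  · exact hF'meas
  · rw [ae_restrict_iff' measurableSet_Ioi]
    filter_upwards with u hu
    exact hbound u hu
  · rw [ae_restrict_iff' measurableSet_Ioi]
    filter_upwards with u _
    exact fun x _ => hder u x

end FkAux


open FkAux Filter Set

theorem Fk_pde_and_decay (d ℓ : ℕ) (hd : 0 < d) (hℓ : d ≤ ℓ) (k : ℤ)
    (hk0 : 0 ≤ k) (hk : k ≤ (ℓ : ℤ) - d)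
    (H : EuclideanSpace ℝ (Fin d) → ℂ) (hHsm : ContDiff ℝ (⊤ : ℕ∞) H)
    (hHdec : ∀ (n : ℕ) (p : ℝ), 0 < p → ∃ C : ℝ,
      ∀ y : EuclideanSpace ℝ (Fin d), ‖iteratedFDeriv ℝ n H y‖ ≤ C * (1 + ‖y‖) ^ (-p))
    (F : EuclideanSpace ℝ (Fin d) → ℂ)
    (hF : ∀ y : EuclideanSpace ℝ (Fin d), y ≠ 0 →
      F y = (ℓ : ℂ) * ((‖y‖ : ℂ) ^ ((ℓ : ℤ) - d - k)) *
        ∫ ρ in Set.Ioi ‖y‖, H (ρ • (‖y‖⁻¹ • y)) / (ρ : ℂ) ^ ((ℓ : ℤ) - d - k + 1)) :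
    (∀ y : EuclideanSpace ℝ (Fin d), y ≠ 0 →
      DifferentiableAt ℝ F y ∧
      ((ℓ : ℂ) - d - k) * F y -
          (∑ j : Fin d, (y j : ℂ) * fderiv ℝ F y (EuclideanSpace.single j 1))
        = (ℓ : ℂ) * H y) ∧
    Filter.Tendsto F (Filter.cocompact (EuclideanSpace ℝ (Fin d))) (nhds 0) := by
  classical
  set m : ℕ := ((ℓ : ℤ) - d - k).toNat with hmdef
  have hmz : (m : ℤ) = (ℓ : ℤ) - d - k := Int.toNat_of_nonneg (by omega)
  obtain ⟨C₀, hC₀'⟩ := hHdec 0 1 one_pos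
  have hC₀ : ∀ z, ‖H z‖ ≤ C₀ * (1 + ‖z‖)⁻¹ := by
    intro z
    have := hC₀' z
    rwa [norm_iteratedFDeriv_zero, Real.rpow_neg_one] at this
  have hC₀0 : 0 ≤ C₀ := by
    have := (norm_nonneg (H 0)).trans (hC₀ 0); simpa using this
  obtain ⟨C₁, hC₁'⟩ := hHdec 1 2 two_pos
  have hC₁ : ∀ z, ‖fderiv ℝ H z‖ ≤ C₁ * ((1 + ‖z‖) ^ 2)⁻¹ := by
    intro z
    have h1 := hC₁' z
    have e : ‖fderiv ℝ H z‖ = ‖iteratedFDeriv ℝ 1 H z‖ := by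
      rw [← norm_iteratedFDeriv_fderiv (n := 0), norm_iteratedFDeriv_zero]
    rw [e]
    refine h1.trans_eq ?_
    congr 1
    rw [show (-2:ℝ) = -((2:ℕ):ℝ) by norm_num, Real.rpow_neg (by positivity),
      Real.rpow_natCast]
  -- F = G on nonzero vectors
  have hFG : ∀ y : EuclideanSpace ℝ (Fin d), y ≠ 0 → F y = (ℓ : ℂ) * ψ H m y 1 := by
    intro y hy
    have hr : 0 < ‖y‖ := norm_pos_iff.mpr hy
    have hrne : (‖y‖ : ℂ) ≠ 0 := Complex.ofReal_ne_zero.mpr hr.ne'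
    have key : ∀ ρ ∈ Ioi ‖y‖, H (ρ • (‖y‖⁻¹ • y)) / (ρ:ℂ) ^ ((ℓ:ℤ) - d - k + 1)
        = h H m y (‖y‖⁻¹ * ρ) / (‖y‖:ℂ) ^ (m+1) := by
      intro ρ hρ
      have hρ0 : 0 < ρ := lt_trans hr hρ
      have hsm : ρ • (‖y‖⁻¹ • y) = (‖y‖⁻¹ * ρ) • y := by rw [smul_smul, mul_comm]
      have e2 : (ρ:ℂ) ^ ((ℓ:ℤ) - d - k + 1) = (ρ:ℂ) ^ ((m+1 : ℕ) : ℤ) := by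
        congr 1; omega
      rw [e2, zpow_natCast, hsm, FkAux.h, div_div]
      have e3 : ((((‖y‖⁻¹ * ρ : ℝ)):ℂ)) ^ (m+1) * (‖y‖:ℂ) ^ (m+1) = (ρ:ℂ) ^ (m+1) := by
        rw [← mul_pow]
        congr 1
        push_cast
        field_simp
      rw [e3]
    rw [hF y hy, setIntegral_congr_fun measurableSet_Ioi key, integral_div,
      int_scale m y (inv_pos.mpr hr) ‖y‖, inv_inv, inv_mul_cancel₀ hr.ne']
    have e1 : ((‖y‖:ℂ)) ^ ((ℓ:ℤ) - d - k) = (‖y‖:ℂ) ^ (m : ℕ) := by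
      rw [show (ℓ:ℤ) - d - k = ((m:ℕ):ℤ) from hmz.symm, zpow_natCast]
    rw [e1, Complex.real_smul, pow_succ]
    field_simp
  constructor
  · -- PDE part
    intro y hy
    have hr : 0 < ‖y‖ := norm_pos_iff.mpr hy
    have hev : F =ᶠ[nhds y] fun x => (ℓ : ℂ) * ψ H m x 1 := by
      filter_upwards [IsOpen.mem_nhds isOpen_compl_singleton hy] with x hx
      exact hFG x hx
    obtain ⟨L₀, hL₀⟩ := G_hasFDerivAt_s15 hHsm hC₁ m hy
      (h_integrableOn hHsm.continuous hC₀ m hy one_pos)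
    have hG : HasFDerivAt (fun x => (ℓ : ℂ) * ψ H m x 1) ((ℓ:ℂ) • L₀) y := by
      exact hL₀.const_smul ((ℓ:ℂ))
    have hdF : DifferentiableAt ℝ F y := hev.differentiableAt_iff.mpr hG.differentiableAt
    have hfd : fderiv ℝ F y = (ℓ:ℂ) • L₀ := by rw [hev.fderiv_eq, hG.fderiv]
    refine ⟨hdF, ?_⟩
    have hysum : ∑ j, y j • (EuclideanSpace.single j (1:ℝ)) = y := by
      have := (EuclideanSpace.basisFun (Fin d) ℝ).sum_repr y
      simpa [EuclideanSpace.basisFun_apply, EuclideanSpace.basisFun_repr] using this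
    have hsum : ∑ j, (y j : ℂ) * (fderiv ℝ F y) (EuclideanSpace.single j 1)
        = ((ℓ:ℂ) • L₀) y := by
      rw [hfd]
      calc ∑ j, (y j : ℂ) * ((ℓ:ℂ) • L₀) (EuclideanSpace.single j 1)
          = ∑ j, ((ℓ:ℂ) • L₀) (y j • EuclideanSpace.single j 1) := by
            refine Finset.sum_congr rfl fun j _ => ?_
            rw [ContinuousLinearMap.map_smul, Complex.real_smul]
        _ = ((ℓ:ℂ) • L₀) (∑ j, y j • EuclideanSpace.single j 1) := by
            rw [map_sum]
        _ = ((ℓ:ℂ) • L₀) y := by rw [hysum]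
    -- ray derivative computation
    have hψ : HasDerivAt (ψ H m y) (-(h H m y 1)) 1 :=
      psi_hasDerivAt hHsm.continuous hC₀ m hy
    have hA : HasDerivAt (fun s : ℝ => ((s:ℂ)) ^ m) ((m:ℂ)) 1 := by
      have := (hasDerivAt_pow m (((1:ℝ)):ℂ)).comp_ofReal
      simpa using this
    have hprod : HasDerivAt (fun s : ℝ => (ℓ:ℂ) * (((s:ℂ)) ^ m * ψ H m y s))
        ((ℓ:ℂ) * ((m:ℂ) * ψ H m y 1 + ((1:ℝ):ℂ) ^ m * -(h H m y 1))) 1 :=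
      HasDerivAt.const_mul ((ℓ:ℂ)) (hA.mul hψ)
    have hGs : ∀ s : ℝ, 0 < s →
        (ℓ : ℂ) * ψ H m (s • y) 1 = (ℓ:ℂ) * (((s:ℂ)) ^ m * ψ H m y s) := by
      intro s hs
      rw [G_scale m y hs]
    have hsy : HasDerivAt (fun s : ℝ => s • y) y 1 := by
      simpa using (hasDerivAt_id (1:ℝ)).smul_const y
    have hcomp : HasDerivAt (fun s : ℝ => (ℓ : ℂ) * ψ H m (s • y) 1) (((ℓ:ℂ) • L₀) y) 1 := by
      have h0 : HasFDerivAt (fun x => (ℓ : ℂ) * ψ H m x 1) ((ℓ:ℂ) • L₀)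
          ((fun s : ℝ => s • y) 1) := by simpa using hG
      exact h0.comp_hasDerivAt 1 hsy
    have hray2 : HasDerivAt (fun s : ℝ => (ℓ : ℂ) * ψ H m (s • y) 1)
        ((ℓ:ℂ) * ((m:ℂ) * ψ H m y 1 + ((1:ℝ):ℂ) ^ m * -(h H m y 1))) 1 := by
      refine hprod.congr_of_eventuallyEq ?_
      filter_upwards [isOpen_Ioi.mem_nhds (Set.mem_Ioi.mpr one_pos)] with s hs
      exact hGs s hs
    have huniq := hcomp.unique hray2
    have hh1 : h H m y 1 = H y := by
      rw [FkAux.h]; simp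
    have hmc : ((ℓ : ℂ) - d - k) = (m : ℂ) := by
      have h9 : ((m:ℤ) : ℂ) = (((ℓ : ℤ) - d - k : ℤ) : ℂ) := by rw [hmz]
      push_cast at h9
      rw [h9]
    rw [hsum, huniq, hmc, hFG y hy, hh1]
    simp only [Complex.ofReal_one, one_pow]
    ring
  · -- decay part
    set I : ℝ := ∫ u in Ioi (1:ℝ), u ^ (-2:ℝ) with hI
    have hbnd : ∀ y : EuclideanSpace ℝ (Fin d), 1 ≤ ‖y‖ →
        ‖F y‖ ≤ ((ℓ:ℝ) * C₀ * I) / ‖y‖ := by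
      intro y hy1
      have hr : 0 < ‖y‖ := lt_of_lt_of_le one_pos hy1
      have hy : y ≠ 0 := norm_pos_iff.mp hr
      rw [hFG y hy, norm_mul]
      have hns : ‖ψ H m y 1‖ ≤ (C₀ / ‖y‖) * I := by
        have hb2 : ∀ᵐ u ∂(volume.restrict (Ioi (1:ℝ))),
            ‖h H m y u‖ ≤ (C₀/‖y‖) * u ^ (-2:ℝ) := by
          rw [ae_restrict_iff' measurableSet_Ioi]
          filter_upwards with u hu
          have hu1 : (1:ℝ) < u := hu
          refine (h_norm_le hC₀ m hy (lt_trans one_pos hu1)).trans ?_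
          refine mul_le_mul_of_nonneg_left ?_ (by positivity)
          refine Real.rpow_le_rpow_of_exponent_le hu1.le ?_
          have : (0:ℝ) ≤ (m:ℝ) := Nat.cast_nonneg m
          linarith
        have hgint : Integrable (fun u : ℝ => (C₀/‖y‖) * u ^ (-2:ℝ))
            (volume.restrict (Ioi (1:ℝ))) :=
          (integrableOn_Ioi_rpow_of_lt (by norm_num) one_pos).const_mul _
        have := MeasureTheory.norm_integral_le_of_norm_le hgint hb2
        refine this.trans_eq ?_
        rw [MeasureTheory.integral_const_mul]
      have hnl : ‖((ℓ:ℕ) : ℂ)‖ = (ℓ:ℝ) := by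
        rw [Complex.norm_natCast]
      rw [hnl]
      calc (ℓ:ℝ) * ‖ψ H m y 1‖ ≤ (ℓ:ℝ) * ((C₀ / ‖y‖) * I) := by
            exact mul_le_mul_of_nonneg_left hns (Nat.cast_nonneg ℓ)
        _ = ((ℓ:ℝ) * C₀ * I) / ‖y‖ := by ring
    have h2 : ∀ᶠ y in Filter.cocompact (EuclideanSpace ℝ (Fin d)),
        ‖F y‖ ≤ ((ℓ:ℝ) * C₀ * I) / ‖y‖ :=
      (tendsto_norm_cocompact_atTop.eventually_ge_atTop 1).mono fun y hy => hbnd y hy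
    have h3 : Tendsto (fun y : EuclideanSpace ℝ (Fin d) => ((ℓ:ℝ) * C₀ * I) / ‖y‖)
        (Filter.cocompact (EuclideanSpace ℝ (Fin d))) (nhds 0) := by
      have h4 := (tendsto_norm_cocompact_atTop
        (E := EuclideanSpace ℝ (Fin d))).inv_tendsto_atTop
      have h5 := h4.const_mul ((ℓ:ℝ) * C₀ * I)
      simpa [div_eq_mul_inv, Pi.inv_def] using h5
    exact tendsto_zero_iff_norm_tendsto_zero.mpr
      (squeeze_zero' (Filter.Eventually.of_forall fun _ => norm_nonneg _) h2 h3)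
end
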